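/- arXiv:1508.06269 — 5 statements merged into one kernel-verified Lean document; each statement's English description precedes it below -/
import Mathlib

section
/- In a finite-horizon dynamic game where N players' types evolve as conditionally independent controlled Markov chains (the joint transition kernel factorizes as a product over players of kernels Q_t^i(x_t^i | x_{t-1}^i, a_{t-1})) and each player i's action A_t^i is chosen according to a strategy g_t^i depending only on the public action history a_{1:t-1} and its own private type history x_{1:t}^i, the posterior distribution of the joint type history given the public action history factorizes: P^g(x_{1:t} | a_{1:t-1}) = ∏_{i=1}^N P^{g^i}(x_{1:t}^i | a_{1:t-1}), where each factor depends only on player i's own strategy g^i. -/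
/-!
The probability of a trajectory is a product over players of weights, player `i`'s weight
collecting its own type kernels and its own strategy, and seeing the other players only through
the public actions. Summing out the future, newest type first and then newest action, only uses
that kernels and strategies are stochastic and causal, so `P(x_{<t}, a_{<t-1})` is the product of
the truncated weights `playerWeight`. Grouping the type histories by their prefix then factorizes
once more: `P(a_{<t-1})` is the product of the players' masses `playerMass`, and
`P(x^i_{<t}, a_{<t-1})` is `playerWeight i` times the masses of the other players. Hence
`P(x^i_{<t} | a_{<t-1}) = playerWeight i / playerMass i`, which involves only `g i`, and the joint
posterior is the product of these.
-/

open scoped Classical BigOperators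

noncomputable section

namespace DynGame

variable (N T : ℕ) (X A : Fin N → Type)
  [∀ i, Fintype (X i)] [∀ i, Fintype (A i)]

/-- A (behavioral) strategy profile: player `i` at time `t` sees the public action
history and its own private type history and randomizes over its actions. -/
abbrev Strat := ∀ i : Fin N, Fin T → (Fin T → ∀ j, A j) → (Fin T → X i) → A i → ℝ

/-- Probability of a full trajectory `(x_{1:T}, a_{1:T})` under the prior `Q1`,
the conditionally independent controlled Markov kernels `Qk` and the profile `g`. -/
def trajP (Q1 : ∀ i, X i → ℝ)
    (Qk : ∀ i, Fin T → X i → (∀ j, A j) → X i → ℝ)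
    (g : Strat N T X A)
    (x : Fin T → ∀ i, X i) (a : Fin T → ∀ i, A i) : ℝ :=
  (if h : 0 < T then ∏ i, Q1 i (x ⟨0, h⟩ i) else 1) *
  ∏ t : Fin T,
    ((∏ i, g i t a (fun s => x s i) (a t i)) *
     ∏ i, (if h : (t : ℕ) + 1 < T then
              Qk i ⟨(t : ℕ) + 1, h⟩ (x t i) (a t) (x ⟨(t : ℕ) + 1, h⟩ i) else 1))

/-- Causality: the strategy depends only on the strict past of public actions and the
past (including present) of the player's own types. -/
def Causal (g : Strat N T X A) : Prop :=
  ∀ i (t : Fin T) a a' xi xi',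
    (∀ s : Fin T, (s : ℕ) < (t : ℕ) → a s = a' s) →
    (∀ s : Fin T, (s : ℕ) ≤ (t : ℕ) → xi s = xi' s) →
    g i t a xi = g i t a' xi'

/-- The strategy profile is made of probability distributions. -/
def Stochastic (g : Strat N T X A) : Prop :=
  ∀ i t a xi, (∀ b, 0 ≤ g i t a xi b) ∧ (∑ b, g i t a xi b) = 1

def StochKer (Q1 : ∀ i, X i → ℝ) (Qk : ∀ i, Fin T → X i → (∀ j, A j) → X i → ℝ) : Prop :=
  (∀ i, (∀ x, 0 ≤ Q1 i x) ∧ (∑ x, Q1 i x) = 1) ∧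
  (∀ i t x a, (∀ x', 0 ≤ Qk i t x a x') ∧ (∑ x', Qk i t x a x') = 1)

variable (Q1 : ∀ i, X i → ℝ) (Qk : ∀ i, Fin T → X i → (∀ j, A j) → X i → ℝ)

/-- Marginal probability of the public action history `a_{1:t-1}`
(indices `s` with `s+1 ≤ t-1 <-> s+1 < t` in 0-based time). -/
def aMarg (g : Strat N T X A) (t : ℕ) (a : Fin T → ∀ i, A i) : ℝ :=
  ∑ x' : Fin T → ∀ i, X i, ∑ a' : Fin T → ∀ i, A i,
    if (∀ s : Fin T, (s : ℕ) + 1 < t → a' s = a s) then trajP N T X A Q1 Qk g x' a' else 0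

/-- Joint probability of `(x_{1:t}, a_{1:t-1})`. -/
def xaMarg (g : Strat N T X A) (t : ℕ) (x : Fin T → ∀ i, X i) (a : Fin T → ∀ i, A i) : ℝ :=
  ∑ x' : Fin T → ∀ i, X i, ∑ a' : Fin T → ∀ i, A i,
    if (∀ s : Fin T, (s : ℕ) + 1 < t → a' s = a s) ∧ (∀ s : Fin T, (s : ℕ) < t → x' s = x s)
    then trajP N T X A Q1 Qk g x' a' else 0

/-- Joint conditional `P^g(x_{1:t} | a_{1:t-1})`. -/
def condJoint (g : Strat N T X A) (t : ℕ) (x : Fin T → ∀ i, X i) (a : Fin T → ∀ i, A i) : ℝ :=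
  xaMarg N T X A Q1 Qk g t x a / aMarg N T X A Q1 Qk g t a

/-- Probability of `(x_{1:t}^i, a_{1:t-1})` for a single player `i`. -/
def xiMarg (g : Strat N T X A) (i : Fin N) (t : ℕ) (xi : Fin T → X i)
    (a : Fin T → ∀ i, A i) : ℝ :=
  ∑ x' : Fin T → ∀ i, X i, ∑ a' : Fin T → ∀ i, A i,
    if (∀ s : Fin T, (s : ℕ) + 1 < t → a' s = a s) ∧ (∀ s : Fin T, (s : ℕ) < t → x' s i = xi s)
    then trajP N T X A Q1 Qk g x' a' else 0

/-- Player-`i` marginal conditional `P^g(x_{1:t}^i | a_{1:t-1})`. -/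
def condI (g : Strat N T X A) (i : Fin N) (t : ℕ) (xi : Fin T → X i)
    (a : Fin T → ∀ i, A i) : ℝ :=
  xiMarg N T X A Q1 Qk g i t xi a / aMarg N T X A Q1 Qk g t a

end DynGame

namespace DynGame

section Finite

theorem sum_ite_eq_sum_sum_ite {α γ M : Type*} [Fintype α] [Fintype γ] [AddCommMonoid M]
    {P : α → Prop} [DecidablePred P] {R : γ → α → Prop} [∀ c, DecidablePred (R c)]
    (f : α → γ) (hR : ∀ c v, R c v ↔ P v ∧ f v = c) (F : α → M) :
    ∑ v, (if P v then F v else 0) = ∑ c, ∑ v, if R c v then F v else 0 := by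
  rw [Finset.sum_comm]
  refine Finset.sum_congr rfl fun v _ => ?_
  simp only [hR, ite_and, Finset.sum_ite_irrel, Finset.sum_ite_eq, Finset.mem_univ, if_true,
    Finset.sum_const_zero]

variable {ι κ R : Type*} [Fintype ι] [DecidableEq ι] [Fintype κ] [DecidableEq κ]
  {δ : κ → Type*} [∀ j, Fintype (δ j)] [CommSemiring R]

theorem sum_prod_piComm (H : ∀ j, (ι → δ j) → R) :
    ∑ y : ι → ∀ j, δ j, ∏ j, H j (fun s => y s j) = ∏ j, ∑ yj, H j yj := by
  rw [Fintype.prod_sum]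
  exact Fintype.sum_equiv (Equiv.piComm fun _ j => δ j) _ _ fun _ => rfl

theorem sum_ite_forall_prod (C : ∀ j, (ι → δ j) → Prop) [∀ j, DecidablePred (C j)]
    (G : ∀ j, (ι → δ j) → R) :
    (∑ y : ι → ∀ j, δ j,
        if ∀ j, C j (fun s => y s j) then ∏ j, G j (fun s => y s j) else 0)
      = ∏ j, ∑ yj, if C j yj then G j yj else 0 := by
  rw [← sum_prod_piComm]
  simp only [Fintype.prod_ite_zero]

end Finite

section Agree

variable {T : ℕ} {β ι : Type*} {γ : ι → Type*}

def AgreeBelow (k : ℕ) (y z : Fin T → β) : Prop :=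
  ∀ s : Fin T, (s : ℕ) < k → y s = z s

def AgreeFrom (k : ℕ) (y z : Fin T → β) : Prop :=
  ∀ s : Fin T, k ≤ (s : ℕ) → y s = z s

theorem AgreeBelow.proj {k : ℕ} {y z : Fin T → ∀ j, γ j} (h : AgreeBelow k y z) (j : ι) :
    AgreeBelow k (fun s => y s j) (fun s => z s j) :=
  fun s hs => congrFun (h s hs) j

theorem agreeBelow_update {k : ℕ} (hk : k < T) (z : Fin T → β) (c : β) :
    AgreeBelow k (Function.update z ⟨k, hk⟩ c) z :=
  fun _ hs => Function.update_of_ne (Fin.ne_of_lt hs) _ _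

theorem agreeBelow_pred_iff {k : ℕ} {y z : Fin T → β} :
    AgreeBelow (k - 1) y z ↔ ∀ s : Fin T, (s : ℕ) + 1 < k → y s = z s :=
  forall_congr' fun s => imp_congr_left (by omega)

theorem agreeBelow_succ_iff_of_le {k : ℕ} (hk : T ≤ k) {y z : Fin T → β} :
    AgreeBelow (k + 1) y z ↔ AgreeBelow k y z :=
  forall_congr' fun s => by simp only [show (s : ℕ) < k by omega, show (s : ℕ) < k + 1 by omega]

theorem agreeBelow_iff_eq_of_le {k : ℕ} (hk : T ≤ k) {y z : Fin T → β} :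
    AgreeBelow k y z ↔ y = z :=
  ⟨fun h => funext fun s => h s (by omega), fun h s _ => h ▸ rfl⟩

theorem agreeBelow_succ_update_iff {k : ℕ} (hk : k < T) (y z : Fin T → β) (c : β) :
    AgreeBelow (k + 1) y (Function.update z ⟨k, hk⟩ c)
      ↔ AgreeBelow k y z ∧ y ⟨k, hk⟩ = c := by
  constructor
  · intro h
    refine ⟨fun s hs => ?_, by simpa using h ⟨k, hk⟩ (by simp)⟩
    rw [h s (by omega), Function.update_of_ne (Fin.ne_of_val_ne (by simp; omega))]
  · rintro ⟨h, rfl⟩ s hs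
    rcases eq_or_ne s ⟨k, hk⟩ with rfl | hne
    · simp
    · rw [Function.update_of_ne hne, h s (by have := Fin.val_ne_of_ne hne; simp at this; omega)]

theorem agreeFrom_and_agreeBelow_iff {k : ℕ} {y z : Fin T → β} :
    AgreeFrom k y z ∧ AgreeBelow k y z ↔ y = z := by
  refine ⟨fun ⟨hf, hb⟩ => funext fun s => ?_,
    fun h => ⟨fun _ _ => h ▸ rfl, fun _ _ => h ▸ rfl⟩⟩
  by_cases hs : (s : ℕ) < k
  exacts [hb s hs, hf s (by omega)]

theorem agreeFrom_pi_iff {k : ℕ} {y z : Fin T → ∀ j, γ j} :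
    AgreeFrom k y z ↔ ∀ j, AgreeFrom k (fun s => y s j) (fun s => z s j) := by
  simp only [AgreeFrom, funext_iff]
  exact ⟨fun h j s hs => h s hs j, fun h s hs j => h j s hs⟩

variable {M : Type*} [Fintype β] [AddCommMonoid M]

theorem sum_agreeBelow_eq_sum_sum_update {k : ℕ} (hk : k < T) (z : Fin T → β)
    (F : (Fin T → β) → M) :
    ∑ y, (if AgreeBelow k y z then F y else 0)
      = ∑ c, ∑ y, if AgreeBelow (k + 1) y (Function.update z ⟨k, hk⟩ c) then F y else 0 :=
  sum_ite_eq_sum_sum_ite (fun y => y ⟨k, hk⟩) (fun c y => agreeBelow_succ_update_iff hk y z c) F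

theorem sum_ite_eq_sum_agreeFrom (k : ℕ) (z : Fin T → β) {C : (Fin T → β) → Prop}
    [DecidablePred C] (hC : ∀ y y', AgreeBelow k y y' → (C y ↔ C y'))
    (F : (Fin T → β) → M) :
    ∑ y, (if C y then F y else 0)
      = ∑ w, if AgreeFrom k w z ∧ C w
          then ∑ y, (if AgreeBelow k y w then F y else 0) else 0 := by
  let splice (y : Fin T → β) : Fin T → β := fun s => if (s : ℕ) < k then y s else z s
  have hsplice (y : Fin T → β) : AgreeBelow k y (splice y) := fun s hs => by simp [splice, hs]
  rw [sum_ite_eq_sum_sum_ite splice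
    (R := fun w y => (AgreeFrom k w z ∧ C w) ∧ AgreeBelow k y w)]
  · simp only [ite_and, Finset.sum_ite_irrel, Finset.sum_const_zero]
  · intro w y
    constructor
    · rintro ⟨⟨hw, hCw⟩, hyw⟩
      refine ⟨(hC y w hyw).2 hCw, funext fun s => ?_⟩
      by_cases hs : (s : ℕ) < k
      · simp [splice, hs, hyw s hs]
      · simp [splice, hs, hw s (by omega)]
    · rintro ⟨hCy, rfl⟩
      exact ⟨⟨fun s hs => by simp [splice, show ¬ (s : ℕ) < k by omega],
        (hC y _ (hsplice y)).1 hCy⟩, hsplice y⟩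

end Agree

abbrev PlayerStrat (N T : ℕ) (X A : Fin N → Type) (i : Fin N) :=
  Fin T → (Fin T → ∀ j, A j) → (Fin T → X i) → A i → ℝ

section Weights

variable {N T : ℕ} {X A : Fin N → Type} (Q1 : ∀ i, X i → ℝ)
  (Qk : ∀ i, Fin T → X i → (∀ j, A j) → X i → ℝ)

/-- Factor `k` is the law of the type `x_k`, and factor `k` of `actionFactor` that of the action
`a_{k-1}` (times are `0`-based), so the first `t` factors of both cover exactly `x_{<t}` and
`a_{<t-1}`. -/
def typeFactor (i : Fin N) (y : Fin T → X i) (a : Fin T → ∀ j, A j) : ℕ → ℝ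
  | 0 => if h : 0 < T then Q1 i (y ⟨0, h⟩) else 1
  | k + 1 => if h : k + 1 < T then
      Qk i ⟨k + 1, h⟩ (y ⟨k, by omega⟩) (a ⟨k, by omega⟩) (y ⟨k + 1, h⟩) else 1

def actionFactor (i : Fin N) (gi : PlayerStrat N T X A i) (y : Fin T → X i)
    (a : Fin T → ∀ j, A j) : ℕ → ℝ
  | 0 => 1
  | k + 1 => if h : k < T then gi ⟨k, h⟩ a y (a ⟨k, h⟩ i) else 1

def playerWeight (i : Fin N) (gi : PlayerStrat N T X A i) (t : ℕ) (y : Fin T → X i)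
    (a : Fin T → ∀ j, A j) : ℝ :=
  ∏ k ∈ Finset.range t, actionFactor i gi y a k * typeFactor Q1 Qk i y a k

/-- `z` only fills the entries from time `t` on, which the weight ignores. -/
def playerMass [∀ i, Fintype (X i)] (i : Fin N) (gi : PlayerStrat N T X A i) (t : ℕ)
    (a : Fin T → ∀ j, A j) (z : Fin T → X i) : ℝ :=
  ∑ y, if AgreeFrom t y z then playerWeight Q1 Qk i gi t y a else 0

variable {Q1 Qk} {g : Strat N T X A} {i : Fin N}

theorem playerWeight_succ (gi : PlayerStrat N T X A i) (t : ℕ) (y : Fin T → X i)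
    (a : Fin T → ∀ j, A j) :
    playerWeight Q1 Qk i gi (t + 1) y a
      = playerWeight Q1 Qk i gi t y a * (actionFactor i gi y a t * typeFactor Q1 Qk i y a t) :=
  Finset.prod_range_succ _ _

theorem typeFactor_of_le {k : ℕ} (hk : T ≤ k) (y : Fin T → X i) (a : Fin T → ∀ j, A j) :
    typeFactor Q1 Qk i y a k = 1 := by
  cases k <;> simp [typeFactor] <;> omega

theorem actionFactor_of_lt (gi : PlayerStrat N T X A i) {k : ℕ} (hk : T < k)
    (y : Fin T → X i) (a : Fin T → ∀ j, A j) : actionFactor i gi y a k = 1 := by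
  cases k <;> simp [actionFactor]; omega

theorem actionFactor_congr (hc : Causal N T X A g) {k : ℕ} {y y' : Fin T → X i}
    {a a' : Fin T → ∀ j, A j} (hy : AgreeBelow k y y') (ha : AgreeBelow k a a') :
    actionFactor i (g i) y a k = actionFactor i (g i) y' a' k := by
  cases k with
  | zero => rfl
  | succ k =>
    simp only [actionFactor]
    split_ifs with h
    · rw [hc i ⟨k, h⟩ a a' y y' (fun s hs => ha s (by simp at hs; omega))
        (fun s hs => hy s (by simp at hs; omega)), ha ⟨k, h⟩ (by simp)]
    · rfl

theorem typeFactor_congr {k : ℕ} {y y' : Fin T → X i} {a a' : Fin T → ∀ j, A j}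
    (hy : AgreeBelow (k + 1) y y') (ha : AgreeBelow k a a') :
    typeFactor Q1 Qk i y a k = typeFactor Q1 Qk i y' a' k := by
  cases k with
  | zero => simp only [typeFactor, hy _ (by simp : ((⟨0, _⟩ : Fin T) : ℕ) < 0 + 1)]
  | succ k =>
    simp only [typeFactor]
    split_ifs with h
    · rw [hy ⟨k, by omega⟩ (by simp), hy ⟨k + 1, h⟩ (by simp),
        ha ⟨k, by omega⟩ (by simp)]
    · rfl

theorem playerWeight_congr (hc : Causal N T X A g) {t : ℕ} {y y' : Fin T → X i}
    {a a' : Fin T → ∀ j, A j} (hy : AgreeBelow t y y') (ha : AgreeBelow (t - 1) a a') :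
    playerWeight Q1 Qk i (g i) t y a = playerWeight Q1 Qk i (g i) t y' a' := by
  refine Finset.prod_congr rfl fun k hk => ?_
  rw [Finset.mem_range] at hk
  have hy' : AgreeBelow (k + 1) y y' := fun s hs => hy s (by omega)
  have ha' : AgreeBelow k a a' := fun s hs => ha s (by omega)
  rw [actionFactor_congr hc (fun s hs => hy' s (by omega)) ha', typeFactor_congr hy' ha']

theorem actionFactor_update (hc : Causal N T X A g) {k : ℕ} (hk : k < T) (y : Fin T → X i)
    (a : Fin T → ∀ j, A j) (b : ∀ j, A j) :
    actionFactor i (g i) y (Function.update a ⟨k, hk⟩ b) (k + 1)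
      = g i ⟨k, hk⟩ a y (b i) := by
  simp only [actionFactor, dif_pos hk, Function.update_self]
  rw [hc i ⟨k, hk⟩ _ a y y (fun s hs => Function.update_of_ne (Fin.ne_of_lt hs) _ _)
    fun _ _ => rfl]

theorem playerWeight_of_lt (gi : PlayerStrat N T X A i) {n : ℕ} (hn : T < n)
    (y : Fin T → X i) (a : Fin T → ∀ j, A j) :
    playerWeight Q1 Qk i gi n y a
      = typeFactor Q1 Qk i y a 0
          * ∏ s : Fin T, gi s a y (a s i) * typeFactor Q1 Qk i y a (s + 1) := by
  obtain ⟨m, rfl⟩ : ∃ m, n = m + 1 := ⟨n - 1, by omega⟩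
  rw [playerWeight, Finset.prod_range_succ', mul_comm]
  simp only [actionFactor, one_mul]
  congr 1
  rw [← Finset.prod_subset (Finset.range_subset_range.2 (by omega : T ≤ m)),
    ← Fin.prod_univ_eq_prod_range]
  · simp
  · intro k _ hk
    rw [Finset.mem_range] at hk
    rw [dif_neg hk, typeFactor_of_le (by omega), one_mul]

theorem trajP_eq_prod_playerWeight {n : ℕ} (hn : T < n) (x : Fin T → ∀ j, X j)
    (a : Fin T → ∀ j, A j) :
    trajP N T X A Q1 Qk g x a = ∏ i, playerWeight Q1 Qk i (g i) n (fun s => x s i) a := by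
  simp only [playerWeight_of_lt _ hn, Finset.prod_mul_distrib, trajP]
  congr 1
  · by_cases h : 0 < T <;> simp [typeFactor, h]
  · rw [Finset.prod_comm, Finset.prod_comm (s := Finset.univ) (t := Finset.univ)
      (f := fun _ _ => typeFactor _ _ _ _ _ _)]
    simp [typeFactor]

theorem sum_prod_typeFactor_update [∀ i, Fintype (X i)] (hK : StochKer N T X A Q1 Qk) {k : ℕ}
    (hk : k < T) (x : Fin T → ∀ j, X j) (a : Fin T → ∀ j, A j) :
    ∑ c : ∀ j, X j, ∏ j, typeFactor Q1 Qk j (fun s => Function.update x ⟨k, hk⟩ c s j) a k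
      = 1 := by
  cases k with
  | zero =>
    simp only [typeFactor, dif_pos hk, Function.update_self]
    rw [← Fintype.prod_sum]
    exact Finset.prod_eq_one fun j _ => (hK.1 j).2
  | succ k =>
    have hne : (⟨k, by omega⟩ : Fin T) ≠ ⟨k + 1, hk⟩ := Fin.ne_of_val_ne (by simp)
    simp only [typeFactor, dif_pos hk, Function.update_self, Function.update_of_ne hne]
    rw [← Fintype.prod_sum]
    exact Finset.prod_eq_one fun j _ => (hK.2 j _ _ _).2

theorem sum_prod_strat_eq_one [∀ i, Fintype (A i)] (hg : Stochastic N T X A g) (s : Fin T)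
    (a : Fin T → ∀ j, A j) (x : Fin T → ∀ j, X j) :
    ∑ b : ∀ j, A j, ∏ j, g j s a (fun r => x r j) (b j) = 1 := by
  rw [← Fintype.prod_sum]
  exact Finset.prod_eq_one fun j _ => (hg j s a _).2

end Weights

section Marginals

variable {N T : ℕ} {X A : Fin N → Type} [∀ i, Fintype (X i)] [∀ i, Fintype (A i)]
  (Q1 : ∀ i, X i → ℝ) (Qk : ∀ i, Fin T → X i → (∀ j, A j) → X i → ℝ)

def actionMarg (g : Strat N T X A) (n : ℕ) (a : Fin T → ∀ j, A j)
    (x' : Fin T → ∀ j, X j) : ℝ :=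
  ∑ a', if AgreeBelow n a' a then trajP N T X A Q1 Qk g x' a' else 0

/-- Separate cut-offs for types and actions let the newest type and the newest action be summed
out one at a time. -/
def prefixMarg (g : Strat N T X A) (m n : ℕ) (x : Fin T → ∀ j, X j)
    (a : Fin T → ∀ j, A j) : ℝ :=
  ∑ x', if AgreeBelow m x' x then actionMarg Q1 Qk g n a x' else 0

variable {Q1 Qk} {g : Strat N T X A}

theorem prefixMarg_succ_type {m : ℕ} (hm : m < T) (n : ℕ) (x : Fin T → ∀ j, X j)
    (a : Fin T → ∀ j, A j) :
    prefixMarg Q1 Qk g m n x a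
      = ∑ c, prefixMarg Q1 Qk g (m + 1) n (Function.update x ⟨m, hm⟩ c) a :=
  sum_agreeBelow_eq_sum_sum_update hm x _

theorem prefixMarg_succ_type_of_le {m : ℕ} (hm : T ≤ m) (n : ℕ) (x : Fin T → ∀ j, X j)
    (a : Fin T → ∀ j, A j) :
    prefixMarg Q1 Qk g (m + 1) n x a = prefixMarg Q1 Qk g m n x a := by
  simp only [prefixMarg, agreeBelow_succ_iff_of_le hm]

theorem prefixMarg_succ_action (m : ℕ) {n : ℕ} (hn : n < T) (x : Fin T → ∀ j, X j)
    (a : Fin T → ∀ j, A j) :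
    prefixMarg Q1 Qk g m n x a
      = ∑ b, prefixMarg Q1 Qk g m (n + 1) x (Function.update a ⟨n, hn⟩ b) := by
  simp only [prefixMarg, actionMarg, sum_agreeBelow_eq_sum_sum_update hn a]
  refine (Finset.sum_congr rfl fun x' _ => ?_).trans Finset.sum_comm
  split_ifs <;> simp

theorem prefixMarg_succ_action_of_le (m : ℕ) {n : ℕ} (hn : T ≤ n) (x : Fin T → ∀ j, X j)
    (a : Fin T → ∀ j, A j) :
    prefixMarg Q1 Qk g m (n + 1) x a = prefixMarg Q1 Qk g m n x a := by
  simp only [prefixMarg, actionMarg, agreeBelow_succ_iff_of_le hn]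

theorem prefixMarg_of_le {m n : ℕ} (hm : T ≤ m) (hn : T ≤ n) (x : Fin T → ∀ j, X j)
    (a : Fin T → ∀ j, A j) : prefixMarg Q1 Qk g m n x a = trajP N T X A Q1 Qk g x a := by
  simp [prefixMarg, actionMarg, agreeBelow_iff_eq_of_le hm, agreeBelow_iff_eq_of_le hn]

theorem prefixMarg_sum_out_type (hK : StochKer N T X A Q1 Qk) (hc : Causal N T X A g) {t : ℕ}
    {a : Fin T → ∀ j, A j}
    (h : ∀ x, prefixMarg Q1 Qk g (t + 1) t x a
      = ∏ i, playerWeight Q1 Qk i (g i) (t + 1) (fun s => x s i) a)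
    (x : Fin T → ∀ j, X j) :
    prefixMarg Q1 Qk g t t x a
      = ∏ i, playerWeight Q1 Qk i (g i) t (fun s => x s i) a
          * actionFactor i (g i) (fun s => x s i) a t := by
  rcases lt_or_ge t T with ht | ht
  · have hx (c : ∀ j, X j) := (agreeBelow_update ht x c).proj
    simp only [prefixMarg_succ_type ht, h, playerWeight_succ, ← mul_assoc,
      Finset.prod_mul_distrib, playerWeight_congr hc (hx _ _) (fun _ _ => rfl),
      actionFactor_congr hc (hx _ _) (fun _ _ => rfl), ← Finset.mul_sum,
      sum_prod_typeFactor_update hK ht, mul_one]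
  · simp only [← prefixMarg_succ_type_of_le ht, h, playerWeight_succ, typeFactor_of_le ht,
      mul_one]

theorem prefixMarg_sum_out_action (hg : Stochastic N T X A g) (hc : Causal N T X A g) {t : ℕ}
    (h : ∀ x a, prefixMarg Q1 Qk g t t x a
      = ∏ i, playerWeight Q1 Qk i (g i) t (fun s => x s i) a
          * actionFactor i (g i) (fun s => x s i) a t)
    (x : Fin T → ∀ j, X j) (a : Fin T → ∀ j, A j) :
    prefixMarg Q1 Qk g t (t - 1) x a = ∏ i, playerWeight Q1 Qk i (g i) t (fun s => x s i) a := by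
  cases t with
  | zero => simp [h, actionFactor]
  | succ k =>
    rcases lt_or_ge k T with hk | hk
    · simp only [Nat.add_sub_cancel, prefixMarg_succ_action _ hk, h, Finset.prod_mul_distrib,
        playerWeight_congr (t := k + 1) hc (fun _ _ => rfl) (agreeBelow_update hk a _),
        actionFactor_update hc hk, ← Finset.mul_sum, sum_prod_strat_eq_one hg, mul_one]
    · simp only [Nat.add_sub_cancel, ← prefixMarg_succ_action_of_le _ hk, h,
        actionFactor_of_lt _ (Nat.lt_succ_of_le hk), mul_one]

theorem prefixMarg_eq_prod (hK : StochKer N T X A Q1 Qk) (hg : Stochastic N T X A g)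
    (hc : Causal N T X A g) (t : ℕ) (x : Fin T → ∀ j, X j) (a : Fin T → ∀ j, A j) :
    prefixMarg Q1 Qk g t (t - 1) x a = ∏ i, playerWeight Q1 Qk i (g i) t (fun s => x s i) a := by
  suffices h : ∀ d u, T < u + d → ∀ y b, prefixMarg Q1 Qk g u (u - 1) y b
      = ∏ i, playerWeight Q1 Qk i (g i) u (fun s => y s i) b from h (T + 1) t (by omega) x a
  intro d
  induction d with
  | zero =>
    intro u hu y b
    rw [Nat.add_zero] at hu
    rw [prefixMarg_of_le (by omega) (by omega), trajP_eq_prod_playerWeight hu]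
  | succ d ih =>
    intro u hu
    exact prefixMarg_sum_out_action hg hc fun y b =>
      prefixMarg_sum_out_type hK hc (ih (u + 1) (by omega) · b) y

end Marginals

section Posterior

variable {N T : ℕ} {X A : Fin N → Type} [∀ i, Fintype (X i)] [∀ i, Fintype (A i)]
  {Q1 : ∀ i, X i → ℝ} {Qk : ∀ i, Fin T → X i → (∀ j, A j) → X i → ℝ}
  {g : Strat N T X A}

theorem xaMarg_eq_prod (hK : StochKer N T X A Q1 Qk) (hg : Stochastic N T X A g)
    (hc : Causal N T X A g) (t : ℕ) (x : Fin T → ∀ j, X j) (a : Fin T → ∀ j, A j) :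
    xaMarg N T X A Q1 Qk g t x a = ∏ i, playerWeight Q1 Qk i (g i) t (fun s => x s i) a := by
  rw [← prefixMarg_eq_prod hK hg hc, xaMarg, prefixMarg]
  refine Finset.sum_congr rfl fun x' _ => ?_
  simp only [actionMarg, agreeBelow_pred_iff]
  by_cases hx : AgreeBelow t x' x
  · rw [if_pos hx]
    exact Finset.sum_congr rfl fun a' _ => if_congr (and_iff_left hx) rfl rfl
  · rw [if_neg hx]
    exact Finset.sum_eq_zero fun a' _ => if_neg fun h => hx h.2

theorem sum_actionMarg_eq_prod (hK : StochKer N T X A Q1 Qk) (hg : Stochastic N T X A g)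
    (hc : Causal N T X A g) (t : ℕ) (a : Fin T → ∀ j, A j) (z : Fin T → ∀ j, X j)
    (C : ∀ j, (Fin T → X j) → Prop) [∀ j, DecidablePred (C j)]
    (hC : ∀ j y y', AgreeBelow t y y' → (C j y ↔ C j y')) :
    ∑ x', (if ∀ j, C j (fun s => x' s j) then actionMarg Q1 Qk g (t - 1) a x' else 0)
      = ∏ j, ∑ y, if AgreeFrom t y (fun s => z s j) ∧ C j y
          then playerWeight Q1 Qk j (g j) t y a else 0 := by
  rw [sum_ite_eq_sum_agreeFrom t z
    (fun y y' h => forall_congr' fun j => hC j _ _ (h.proj j))]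
  refine (Finset.sum_congr rfl fun w _ => ?_).trans
    (sum_ite_forall_prod (fun j y => AgreeFrom t y (fun s => z s j) ∧ C j y)
      (fun j y => playerWeight Q1 Qk j (g j) t y a))
  have hw : AgreeFrom t w z ∧ (∀ j, C j fun s => w s j)
      ↔ ∀ j, AgreeFrom t (fun s => w s j) (fun s => z s j) ∧ C j fun s => w s j := by
    rw [agreeFrom_pi_iff, forall_and]
  by_cases hw' : AgreeFrom t w z ∧ ∀ j, C j fun s => w s j
  · rw [if_pos hw', if_pos (hw.1 hw')]
    exact prefixMarg_eq_prod hK hg hc t w a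
  · rw [if_neg hw', if_neg (mt hw.2 hw')]

theorem aMarg_eq_prod (hK : StochKer N T X A Q1 Qk) (hg : Stochastic N T X A g)
    (hc : Causal N T X A g) (t : ℕ) (a : Fin T → ∀ j, A j) (z : Fin T → ∀ j, X j) :
    aMarg N T X A Q1 Qk g t a = ∏ j, playerMass Q1 Qk j (g j) t a (fun s => z s j) := by
  have h := sum_actionMarg_eq_prod hK hg hc t a z (fun _ _ => True) fun _ _ _ _ => Iff.rfl
  simp only [implies_true, if_true, and_true] at h
  calc aMarg N T X A Q1 Qk g t a = ∑ x', actionMarg Q1 Qk g (t - 1) a x' := by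
        simp only [aMarg, actionMarg, agreeBelow_pred_iff]
    _ = _ := h

theorem xiMarg_eq_mul_prod_erase (hK : StochKer N T X A Q1 Qk) (hg : Stochastic N T X A g)
    (hc : Causal N T X A g) (i : Fin N) (t : ℕ) (x : Fin T → ∀ j, X j)
    (a : Fin T → ∀ j, A j) :
    xiMarg N T X A Q1 Qk g i t (fun s => x s i) a
      = playerWeight Q1 Qk i (g i) t (fun s => x s i) a
          * ∏ j ∈ Finset.univ.erase i, playerMass Q1 Qk j (g j) t a (fun s => x s j) := by
  have h := sum_actionMarg_eq_prod hK hg hc t a x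
    (fun j y => j = i → AgreeBelow t y (fun s => x s j)) fun j y y' hyy' =>
      imp_congr_right fun _ => ⟨fun h s hs => (hyy' s hs).symm.trans (h s hs),
        fun h s hs => (hyy' s hs).trans (h s hs)⟩
  rw [← Finset.mul_prod_erase _ _ (Finset.mem_univ i)] at h
  calc xiMarg N T X A Q1 Qk g i t (fun s => x s i) a
      = ∑ x', if ∀ j, j = i → AgreeBelow t (fun s => x' s j) (fun s => x s j)
          then actionMarg Q1 Qk g (t - 1) a x' else 0 := by
        refine Finset.sum_congr rfl fun x' _ => ?_
        by_cases hx : AgreeBelow t (fun s => x' s i) (fun s => x s i)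
        · rw [if_pos fun j hj => hj ▸ hx, actionMarg]
          exact Finset.sum_congr rfl fun a' _ => if_congr
            ⟨fun h => agreeBelow_pred_iff.2 h.1, fun h => ⟨agreeBelow_pred_iff.1 h, hx⟩⟩
            rfl rfl
        · rw [if_neg fun h => hx (h i rfl)]
          exact Finset.sum_eq_zero fun a' _ => if_neg fun h => hx h.2
    _ = _ := by
        rw [h]
        congr 1
        · simp [agreeFrom_and_agreeBelow_iff]
        · refine Finset.prod_congr rfl fun j hj => ?_
          simp [Finset.ne_of_mem_erase hj, playerMass]

theorem condI_eq_div (hK : StochKer N T X A Q1 Qk) (hg : Stochastic N T X A g)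
    (hc : Causal N T X A g) {t : ℕ} {a : Fin T → ∀ j, A j}
    (hpos : 0 < aMarg N T X A Q1 Qk g t a) (i : Fin N) (x : Fin T → ∀ j, X j) :
    condI N T X A Q1 Qk g i t (fun s => x s i) a
      = playerWeight Q1 Qk i (g i) t (fun s => x s i) a
          / playerMass Q1 Qk i (g i) t a (fun s => x s i) := by
  have hA := aMarg_eq_prod hK hg hc t a x
  rw [← Finset.mul_prod_erase _ _ (Finset.mem_univ i)] at hA
  have hrest : ∏ j ∈ Finset.univ.erase i, playerMass Q1 Qk j (g j) t a (fun s => x s j) ≠ 0 :=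
    fun h0 => hpos.ne' (by rw [hA, h0, mul_zero])
  rw [condI, xiMarg_eq_mul_prod_erase hK hg hc, hA, mul_div_mul_right _ _ hrest]

end Posterior

variable (N T : ℕ) (X A : Fin N → Type)
  [∀ i, Fintype (X i)] [∀ i, Fintype (A i)]
variable (Q1 : ∀ i, X i → ℝ) (Qk : ∀ i, Fin T → X i → (∀ j, A j) → X i → ℝ)

theorem conditional_independence_of_types
    (g : Strat N T X A)
    (hK : StochKer N T X A Q1 Qk) (hg : Stochastic N T X A g) (hc : Causal N T X A g)
    (t : ℕ)
    (x : Fin T → ∀ i, X i) (a : Fin T → ∀ i, A i)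
    (hpos : 0 < aMarg N T X A Q1 Qk g t a) :
    condJoint N T X A Q1 Qk g t x a
      = (∏ i, condI N T X A Q1 Qk g i t (fun s => x s i) a) ∧
    (∀ i (g' : Strat N T X A), Stochastic N T X A g' → Causal N T X A g' →
      g' i = g i → 0 < aMarg N T X A Q1 Qk g' t a →
      condI N T X A Q1 Qk g' i t (fun s => x s i) a
        = condI N T X A Q1 Qk g i t (fun s => x s i) a) := by
  refine ⟨?_, fun i g' hg' hc' hgi hpos' => ?_⟩
  · rw [condJoint, xaMarg_eq_prod hK hg hc, aMarg_eq_prod hK hg hc t a x,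
      ← Finset.prod_div_distrib]
    exact Finset.prod_congr rfl fun i _ => (condI_eq_div hK hg hc hpos i x).symm
  · rw [condI_eq_div hK hg' hc' hpos' i x, condI_eq_div hK hg hc hpos i x, hgi]

end DynGame
end
end

section
/- Fix a strategy profile g^{-i} for players other than i in the dynamic game with conditionally independent Markovian types. Then the process with state (a_{1:t-1}, x_t^i) and control a_t^i is a controlled Markov process for player i: the conditional distribution P^g(a_{1:t}, x_{t+1}^i | a_{1:t-1}, x_{1:t}^i, a_t^i) depends only on (a_{1:t-1}, x_t^i, a_t^i) and on g^{-i}, and not on player i's own strategy g^i or on its earlier types x_{1:t-1}^i. -/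
/-!
Write the law of a trajectory as a Bayesian network over the coordinates "type of player `j` at
time `t`" and "action of player `j` at time `t`", each drawn from a normalized kernel that reads
only earlier coordinates (the causality of the strategies). Conditioning pins some coordinates.
The kernels of player `i` at pinned coordinates read only pinned coordinates, so they contribute
the same factor to numerator and denominator, except for the transition
`Q^i_{t+1}(x^i_t, a_t, x^i_{t+1})` of the numerator. In what remains, the future coordinates and the
pinned types of player `i` can be summed out from the latest one backwards, each normalized kernel
summing to one; this leaves a quantity built from the pinned actions and the kernels of the other
players only, hence from `g^{-i}` only.
-/

open scoped Classical BigOperators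

noncomputable section

namespace DynGame

variable (N T : ℕ) (X A : Fin N → Type)
  [∀ i, Fintype (X i)] [∀ i, Fintype (A i)]

variable (Q1 : ∀ i, X i → ℝ) (Qk : ∀ i, Fin T → X i → (∀ j, A j) → X i → ℝ)

/-- Probability of the event `(a_{1:t}, x_{t+1}^i)` together with the conditioning data
`(a_{1:t-1}, x_{1:t}^i, a_t^i)`; here `τ` is the 0-based index of the current period `t`,
so `x_{1:t}^i` are the coordinates `s ≤ τ` of `xi`, `x_{t+1}^i` is `xi (τ+1)`. -/
def num1 (g : Strat N T X A) (i : Fin N) (τ : Fin T) (h1 : (τ : ℕ) + 1 < T)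
    (a : Fin T → ∀ j, A j) (xi : Fin T → X i) : ℝ :=
  ∑ x' : Fin T → ∀ j, X j, ∑ a' : Fin T → ∀ j, A j,
    if (∀ s : Fin T, (s : ℕ) < (τ : ℕ) → a' s = a s) ∧ a' τ = a τ ∧
       (∀ s : Fin T, (s : ℕ) ≤ (τ : ℕ) + 1 → x' s i = xi s)
    then trajP N T X A Q1 Qk g x' a' else 0

/-- Probability of the conditioning data `(a_{1:t-1}, x_{1:t}^i, a_t^i)`. -/
def den1 (g : Strat N T X A) (i : Fin N) (τ : Fin T)
    (a : Fin T → ∀ j, A j) (xi : Fin T → X i) : ℝ :=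
  ∑ x' : Fin T → ∀ j, X j, ∑ a' : Fin T → ∀ j, A j,
    if (∀ s : Fin T, (s : ℕ) < (τ : ℕ) → a' s = a s) ∧ a' τ i = a τ i ∧
       (∀ s : Fin T, (s : ℕ) ≤ (τ : ℕ) → x' s i = xi s)
    then trajP N T X A Q1 Qk g x' a' else 0

/-- The conditional `P^g(a_{1:t}, x_{t+1}^i | a_{1:t-1}, x_{1:t}^i, a_t^i)`. -/
def cond1 (g : Strat N T X A) (i : Fin N) (τ : Fin T) (h1 : (τ : ℕ) + 1 < T)
    (a : Fin T → ∀ j, A j) (xi : Fin T → X i) : ℝ :=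
  num1 N T X A Q1 Qk g i τ h1 a xi / den1 N T X A Q1 Qk g i τ a xi

section Marginalization

variable {ι κ : Type*} {β : ι → Type*}

lemma dependsOn_finset_prod {s : Finset ι} {f : ι → (∀ p, β p) → ℝ} {t : Set ι}
    (hf : ∀ p ∈ s, DependsOn (f p) t) : DependsOn (fun v => ∏ p ∈ s, f p v) t :=
  fun _ _ hvw => Finset.prod_congr rfl fun p hp => hf p hp hvw

variable [Fintype ι] [DecidableEq ι] [LinearOrder κ] [∀ p, Fintype (β p)]

lemma card_mul_sum_mul_kernel (a : ι) {φ : (∀ p, β p) → ℝ} (hφ : DependsOn φ {a}ᶜ)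
    {k : (∀ p, β p) → β a → ℝ} (hk : DependsOn k {a}ᶜ) (hk1 : ∀ v, ∑ b, k v b = 1) :
    (Fintype.card (β a) : ℝ) * ∑ v, φ v * k v (v a) = ∑ v, φ v := by
  have hupd : ∀ (v : ∀ p, β p) b, ∀ p ∈ ({a}ᶜ : Set ι), Function.update v a b p = v p :=
    fun v b p hp => Function.update_of_ne hp b v
  -- trading the sampled value `v a` for a free variable `b` turns `k v (v a)` into `k v b`
  have hinv : Function.Involutive
      fun vb : (∀ p, β p) × β a => (Function.update vb.1 a vb.2, vb.1 a) := by
    rintro ⟨v, b⟩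
    simp
  calc (Fintype.card (β a) : ℝ) * ∑ v, φ v * k v (v a)
      = ∑ vb : (∀ p, β p) × β a, φ vb.1 * k vb.1 (vb.1 a) := by
        rw [Fintype.sum_prod_type, ← Finset.card_univ, ← nsmul_eq_mul, Finset.sum_comm]
        simp
    _ = ∑ vb : (∀ p, β p) × β a, φ vb.1 * k vb.1 vb.2 := by
        rw [← Equiv.sum_comp hinv.toPerm]
        refine Finset.sum_congr rfl fun ⟨v, b⟩ _ => ?_
        simp [hφ (hupd v b), hk (hupd v b)]
    _ = ∑ v, φ v := by
        simp [Fintype.sum_prod_type, ← Finset.mul_sum, hk1]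

lemma prod_card_mul_sum_mul_prod_kernel (r : ι → κ) (h : ∀ p, (∀ q, β q) → β p → ℝ)
    (E : Finset ι) (hcausal : ∀ p ∈ E, DependsOn (h p) {q | r q < r p})
    (hnorm : ∀ p ∈ E, ∀ v, ∑ b, h p v b = 1) {F : (∀ p, β p) → ℝ} (hF : DependsOn F (↑E)ᶜ) :
    (∏ p ∈ E, (Fintype.card (β p) : ℝ)) * ∑ v, F v * ∏ p ∈ E, h p v (v p) = ∑ v, F v := by
  induction E using Finset.induction_on_max_value r generalizing F with
  | empty => simp
  | insert a s has hmax ih =>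
    have hs : ∀ p ∈ s, DependsOn (fun v => h p v (v p)) {a}ᶜ := by
      intro p hp v w hvw
      dsimp only
      have hpa : p ≠ a := fun hpa => has (hpa ▸ hp)
      rw [hcausal p (Finset.mem_insert_of_mem hp) fun q hq => hvw q fun hqa => ?_, hvw p hpa]
      exact (lt_irrefl (r a)) (lt_of_lt_of_le (hqa ▸ hq) (hmax p hp))
    have hφ : DependsOn (fun v => F v * ∏ p ∈ s, h p v (v p)) {a}ᶜ := by
      intro v w hvw
      dsimp only
      rw [hF fun q hq => hvw q fun hqa => hq (hqa ▸ Finset.mem_insert_self a s)]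
      exact congrArg _ (dependsOn_finset_prod hs hvw)
    have hk : DependsOn (h a) {a}ᶜ :=
      (hcausal a (Finset.mem_insert_self a s)).mono (by rintro q hq rfl; exact lt_irrefl _ hq)
    calc (∏ p ∈ insert a s, (Fintype.card (β p) : ℝ)) *
          ∑ v, F v * ∏ p ∈ insert a s, h p v (v p)
        = (∏ p ∈ s, (Fintype.card (β p) : ℝ)) *
            ((Fintype.card (β a) : ℝ) * ∑ v, (F v * ∏ p ∈ s, h p v (v p)) * h a v (v a)) := by
          simp only [Finset.prod_insert has]
          rw [mul_comm (Fintype.card (β a) : ℝ), mul_assoc]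
          congr 2
          exact Finset.sum_congr rfl fun v _ => by ring
      _ = ∑ v, F v := by
          rw [card_mul_sum_mul_kernel a hφ hk (hnorm a (Finset.mem_insert_self a s))]
          exact ih (fun p hp => hcausal p (Finset.mem_insert_of_mem hp))
            (fun p hp => hnorm p (Finset.mem_insert_of_mem hp))
            (hF.mono (Set.compl_subset_compl.2 (Finset.coe_subset.2 (s.subset_insert a))))

lemma sum_mul_prod_kernel_congr (r : ι → κ) (h h' : ∀ p, (∀ q, β q) → β p → ℝ) (E : Finset ι)
    (hcausal : ∀ p ∈ E, DependsOn (h p) {q | r q < r p})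
    (hcausal' : ∀ p ∈ E, DependsOn (h' p) {q | r q < r p})
    (hnorm : ∀ p ∈ E, ∀ v, ∑ b, h p v b = 1) (hnorm' : ∀ p ∈ E, ∀ v, ∑ b, h' p v b = 1)
    {F : (∀ p, β p) → ℝ} (hF : DependsOn F (↑E)ᶜ) :
    ∑ v, F v * ∏ p ∈ E, h p v (v p) = ∑ v, F v * ∏ p ∈ E, h' p v (v p) := by
  rcases isEmpty_or_nonempty (∀ p, β p) with hempty | hne
  · simp [Finset.univ_eq_empty]
  obtain ⟨v₀⟩ := hne
  have hcard : (∏ p ∈ E, (Fintype.card (β p) : ℝ)) ≠ 0 :=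
    Finset.prod_ne_zero_iff.2 fun p _ =>
      Nat.cast_ne_zero.2 (@Fintype.card_ne_zero _ _ ⟨v₀ p⟩)
  exact mul_left_cancel₀ hcard <|
    (prod_card_mul_sum_mul_prod_kernel r h E hcausal hnorm hF).trans
      (prod_card_mul_sum_mul_prod_kernel r h' E hcausal' hnorm' hF).symm

/-- Pinning the coordinates of `D` is sampling them from point masses, which are kernels reading
no coordinate. -/
lemma sum_mul_pin_mul_prod_kernel_congr (r : ι → κ) (h h' : ∀ p, (∀ q, β q) → β p → ℝ)
    {D E : Finset ι} (hDE : Disjoint D E) (c c' : ∀ p, β p)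
    (hcausal : ∀ p ∈ E, DependsOn (h p) {q | r q < r p})
    (hcausal' : ∀ p ∈ E, DependsOn (h' p) {q | r q < r p})
    (hnorm : ∀ p ∈ E, ∀ v, ∑ b, h p v b = 1) (hnorm' : ∀ p ∈ E, ∀ v, ∑ b, h' p v b = 1)
    {F : (∀ p, β p) → ℝ} (hF : DependsOn F (↑(D ∪ E))ᶜ) :
    ∑ v, F v * ((if ∀ p ∈ D, v p = c p then 1 else 0) * ∏ p ∈ E, h p v (v p)) =
      ∑ v, F v * ((if ∀ p ∈ D, v p = c' p then 1 else 0) * ∏ p ∈ E, h' p v (v p)) := by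
  let pinned (c : ∀ p, β p) (h : ∀ p, (∀ q, β q) → β p → ℝ) :
      ∀ p, (∀ q, β q) → β p → ℝ :=
    fun p v b => if p ∈ D then (if b = c p then 1 else 0) else h p v b
  have hsplit : ∀ c h v,
      (if ∀ p ∈ D, v p = c p then (1 : ℝ) else 0) * ∏ p ∈ E, h p v (v p) =
        ∏ p ∈ D ∪ E, pinned c h p v (v p) := by
    intro c h v
    rw [Finset.prod_union hDE]
    congr 1
    · rw [Finset.prod_congr rfl fun p hp => if_pos hp]
      simp [Finset.prod_boole]
    · exact Finset.prod_congr rfl fun p hp => (if_neg (Finset.disjoint_right.1 hDE hp)).symm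
  have hcausal_pinned : ∀ c h, (∀ p ∈ E, DependsOn (h p) {q | r q < r p}) →
      ∀ p ∈ D ∪ E, DependsOn (pinned c h p) {q | r q < r p} := by
    intro c h hc p hp v w hvw
    by_cases hpD : p ∈ D
    · simp [pinned, hpD]
    · simp only [pinned, hpD, if_false]
      exact hc p ((Finset.mem_union.1 hp).resolve_left hpD) hvw
  have hnorm_pinned : ∀ c h, (∀ p ∈ E, ∀ v, ∑ b, h p v b = 1) →
      ∀ p ∈ D ∪ E, ∀ v, ∑ b, pinned c h p v b = 1 := by
    intro c h hn p hp v
    by_cases hpD : p ∈ D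
    · simp [pinned, hpD]
    · simpa [pinned, hpD] using hn p ((Finset.mem_union.1 hp).resolve_left hpD) v
  simp only [hsplit]
  exact sum_mul_prod_kernel_congr r _ _ _ (hcausal_pinned c h hcausal)
    (hcausal_pinned c' h' hcausal') (hnorm_pinned c h hnorm) (hnorm_pinned c' h' hnorm') hF

end Marginalization

section Network

variable {N T : ℕ} {X A : Fin N → Type}

abbrev Idx (N T : ℕ) : Type := Fin T × (Fin N ⊕ Fin N)

def Coord (X A : Fin N → Type) (p : Idx N T) : Type := Sum.elim X A p.2

/-- A whole trajectory, as one dependent function on the coordinates `(t, inl j)` (type of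
player `j` at time `t`) and `(t, inr j)` (action of player `j` at time `t`). -/
abbrev Config (T : ℕ) (X A : Fin N → Type) : Type := ∀ p : Idx N T, Coord X A p

def Idx.player (p : Idx N T) : Fin N := p.2.elim id id

def trajEquiv : Config T X A ≃ (Fin T → ∀ j, X j) × (Fin T → ∀ j, A j) where
  toFun v := (fun t j => v (t, .inl j), fun t j => v (t, .inr j))
  invFun xa
    | (t, .inl j) => xa.1 t j
    | (t, .inr j) => xa.2 t j
  left_inv v := by funext ⟨t, j⟩; cases j <;> rfl
  right_inv _ := rfl

variable (Q1 : ∀ i, X i → ℝ) (Qk : ∀ i, Fin T → X i → (∀ j, A j) → X i → ℝ)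

def kernel (g : Strat N T X A) : ∀ p : Idx N T, Config T X A → Coord X A p → ℝ
  | (t, .inl j), v, b =>
    if h : (t : ℕ) = 0 then Q1 j b
    else Qk j t (v (⟨t - 1, by omega⟩, .inl j)) (fun k => v (⟨t - 1, by omega⟩, .inr k)) b
  | (t, .inr j), v, b => g j t (fun s k => v (s, .inr k)) (fun s => v (s, .inl j)) b

lemma trajP_trajEquiv (g : Strat N T X A) (v : Config T X A) :
    trajP N T X A Q1 Qk g (trajEquiv v).1 (trajEquiv v).2 = ∏ p, kernel Q1 Qk g p v (v p) := by
  obtain _ | n := T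
  · simp [trajP]
  -- the type kernels are indexed by the arrival time, the factors of `trajP` by the departure time
  have htypes : ∏ t : Fin (n + 1), ∏ j, kernel Q1 Qk g (t, .inl j) v (v (t, .inl j)) =
      (∏ j, Q1 j (v (0, .inl j))) *
        ∏ t : Fin (n + 1), ∏ j, (if h : (t : ℕ) + 1 < n + 1 then
          Qk j ⟨t + 1, h⟩ (v (t, .inl j)) (fun k => v (t, .inr k)) (v (⟨t + 1, h⟩, .inl j))
          else 1) := by
    rw [Fin.prod_univ_succ, Fin.prod_univ_castSucc]
    simp only [Fin.val_last, lt_irrefl, dif_neg, not_false_eq_true, Finset.prod_const_one, mul_one]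
    congr 1
    simp only [kernel, Fin.val_succ, Nat.add_eq_zero_iff, one_ne_zero, and_false, ↓reduceDIte,
      Nat.add_one_sub_one, Fin.val_castSucc, Order.lt_add_one_iff, Order.add_one_le_iff, Fin.is_lt]
    rfl
  rw [Fintype.prod_prod_type]
  simp only [Fintype.prod_sum_type, Finset.prod_mul_distrib, htypes]
  simp only [trajP, Nat.succ_pos, dif_pos, Finset.prod_mul_distrib]
  rw [← mul_assoc, mul_right_comm]
  rfl

def rank : Idx N T → ℕ
  | (t, .inl _) => 2 * t
  | (t, .inr _) => 2 * t + 1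

def IsParent : Idx N T → Idx N T → Prop
  | (s, .inl k), (t, .inl j) => k = j ∧ (s : ℕ) + 1 = t
  | (s, .inr _), (t, .inl _) => (s : ℕ) + 1 = t
  | (s, .inl k), (t, .inr j) => k = j ∧ s ≤ t
  | (s, .inr _), (t, .inr _) => s < t

lemma IsParent.rank_lt {p q : Idx N T} (h : IsParent q p) : rank q < rank p := by
  rcases p with ⟨t, j | j⟩ <;> rcases q with ⟨s, k | k⟩ <;>
    simp only [IsParent, rank] at h ⊢ <;> omega

lemma kernel_dependsOn {g : Strat N T X A} (hgc : Causal N T X A g) (p : Idx N T) :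
    DependsOn (kernel Q1 Qk g p) {q | IsParent q p} := by
  intro v w hvw
  funext b
  rcases p with ⟨t, j | j⟩
  · by_cases ht : (t : ℕ) = 0
    · simp [kernel, ht]
    · have hprev : ((⟨t - 1, by omega⟩ : Fin T) : ℕ) + 1 = t := by simp; omega
      simp only [kernel, ht, dif_neg, not_false_eq_true]
      rw [hvw (⟨t - 1, by omega⟩, .inl j) ⟨rfl, hprev⟩]
      congr 2
      exact funext fun k => hvw (⟨t - 1, by omega⟩, .inr k) hprev
  · exact congrFun (hgc j t _ _ _ _ (fun s hs => funext fun k => hvw (s, .inr k) hs)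
      (fun s hs => hvw (s, .inl j) ⟨rfl, hs⟩)) b

/-- `den1` conditions on the coordinates `IsPinned i τ τ` and `num1` on `IsPinned i τ (τ + 1)`
(time is 0-based). -/
def IsPinned (i : Fin N) (τ n : ℕ) : Idx N T → Prop
  | (t, .inl j) => j = i ∧ t ≤ n
  | (t, .inr j) => t < n ∨ j = i ∧ t ≤ τ

def ownPins (i : Fin N) (τ n : ℕ) : Finset (Idx N T) :=
  Finset.univ.filter fun p => IsPinned i τ n p ∧ p.player = i

def othersBefore (i : Fin N) (n : ℕ) : Finset (Idx N T) :=
  Finset.univ.filter fun p => p.player ≠ i ∧ (p.1 : ℕ) < n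

def typePins (i : Fin N) (τ n : ℕ) : Finset (Idx N T) :=
  Finset.univ.filter fun p => IsPinned i τ n p ∧ p.2.isLeft

def future (i : Fin N) (τ n : ℕ) : Finset (Idx N T) := (ownPins i τ n ∪ othersBefore i n)ᶜ

lemma isPinned_of_isParent {i : Fin N} {τ n : ℕ} (hτn : τ ≤ n) {p q : Idx N T}
    (hp : IsPinned i τ n p) (hown : p.player = i) (hq : IsParent q p) : IsPinned i τ n q := by
  rcases p with ⟨t, j | j⟩ <;> rcases q with ⟨s, k | k⟩ <;>
    simp only [IsPinned, IsParent, Idx.player, Sum.elim_inl, Sum.elim_inr, id] at hp hown hq ⊢ <;>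
    omega

lemma notMem_typePins_union_future {i : Fin N} {τ n : ℕ} {q : Idx N T}
    (hq : (IsPinned i τ n q ∧ q.2.isRight) ∨ q ∈ othersBefore i n) :
    q ∉ typePins i τ n ∪ future i τ n := by
  rcases q with ⟨s, k | k⟩ <;>
    simp only [typePins, future, ownPins, othersBefore, Finset.mem_union, Finset.mem_compl,
      Finset.mem_filter, Finset.mem_univ, true_and] at hq ⊢ <;>
    simp only [IsPinned, Idx.player, Sum.elim_inl, Sum.elim_inr, id, Sum.isLeft_inl,
      Sum.isLeft_inr, Sum.isRight_inl, Sum.isRight_inr, Bool.false_eq_true, and_false, and_true,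
      false_or] at hq ⊢ <;>
    tauto

lemma IsParent.isPinned_or_mem_othersBefore {i : Fin N} {τ n : ℕ} {p q : Idx N T}
    (hq : IsParent q p) (hp : p ∈ othersBefore i n) :
    (IsPinned i τ n q ∧ q.2.isRight) ∨ q ∈ othersBefore i n := by
  rcases p with ⟨t, j | j⟩ <;> rcases q with ⟨s, k | k⟩ <;>
    simp only [othersBefore, Finset.mem_filter, Finset.mem_univ, true_and] at hp ⊢ <;>
    simp only [IsPinned, IsParent, Idx.player, Sum.elim_inl, Sum.elim_inr, id, Sum.isRight_inl,
      Sum.isRight_inr, Bool.false_eq_true, and_false, and_true] at hp hq ⊢ <;>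
    omega

def othersWeight (g : Strat N T X A) (c : Config T X A) (i : Fin N) (τ n : ℕ)
    (v : Config T X A) : ℝ :=
  (if ∀ p, IsPinned i τ n p → p.2.isRight → v p = c p then 1 else 0) *
    ∏ p ∈ othersBefore i n, kernel Q1 Qk g p v (v p)

lemma othersWeight_dependsOn {g : Strat N T X A} (hgc : Causal N T X A g) (c : Config T X A)
    (i : Fin N) (τ n : ℕ) :
    DependsOn (othersWeight Q1 Qk g c i τ n)
      (↑(typePins i τ n ∪ future i τ n : Finset (Idx N T)))ᶜ := by
  intro v w hvw
  have hkept : ∀ q, (IsPinned i τ n q ∧ q.2.isRight) ∨ q ∈ othersBefore i n → v q = w q :=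
    fun q hq => hvw q (by simpa using notMem_typePins_union_future hq)
  have hpins : (∀ p, IsPinned i τ n p → p.2.isRight → v p = c p) ↔
      ∀ p, IsPinned i τ n p → p.2.isRight → w p = c p :=
    forall_congr' fun p => imp_congr_right fun hp => imp_congr_right fun hr => by
      rw [hkept p (Or.inl ⟨hp, hr⟩)]
  rw [othersWeight, othersWeight]
  congr 1
  · exact if_congr hpins rfl rfl
  · refine Finset.prod_congr rfl fun p hp => ?_
    rw [kernel_dependsOn Q1 Qk hgc p fun q hq => hkept q (hq.isPinned_or_mem_othersBefore hp),
      hkept p (Or.inr hp)]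

lemma othersWeight_congr {g ĝ : Strat N T X A} {i : Fin N} (hagree : ∀ j, j ≠ i → g j = ĝ j)
    {c c' : Config T X A} (hc : ∀ t j, c (t, .inr j) = c' (t, .inr j)) (τ n : ℕ) :
    othersWeight Q1 Qk g c i τ n = othersWeight Q1 Qk ĝ c' i τ n := by
  funext v
  have hpins : (∀ p, IsPinned i τ n p → p.2.isRight → v p = c p) ↔
      ∀ p, IsPinned i τ n p → p.2.isRight → v p = c' p := by
    refine forall_congr' fun p => imp_congr_right fun _ => ?_
    rcases p with ⟨t, j | j⟩
    · simp
    · simp [hc t j]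
  rw [othersWeight, othersWeight, if_congr hpins rfl rfl]
  congr 1
  refine Finset.prod_congr rfl fun p hp => ?_
  rcases p with ⟨t, j | j⟩
  · rfl
  · have hj : j ≠ i := (Finset.mem_filter.1 hp).2.1
    simp only [kernel, hagree j hj]

/-- A configuration carrying the conditioning data `(a, xi)`; the other players' types, taken
from `x₀`, are never read. -/
def pinRef (x₀ : Fin T → ∀ j, X j) (i : Fin N) (xi : Fin T → X i) (a : Fin T → ∀ j, A j) :
    Config T X A :=
  trajEquiv.symm (fun t => Function.update (x₀ t) i (xi t), a)

lemma pinRef_type (x₀ : Fin T → ∀ j, X j) (i : Fin N) (xi : Fin T → X i)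
    (a : Fin T → ∀ j, A j) (t : Fin T) : pinRef x₀ i xi a (t, .inl i) = xi t :=
  Function.update_self i (xi t) (x₀ t)

lemma kernel_pinRef_next (g : Strat N T X A) (x₀ : Fin T → ∀ j, X j) (i : Fin N)
    (xi : Fin T → X i) (a : Fin T → ∀ j, A j) (τ : Fin T) (h1 : (τ : ℕ) + 1 < T) :
    kernel Q1 Qk g (⟨τ + 1, h1⟩, .inl i) (pinRef x₀ i xi a)
        (pinRef x₀ i xi a (⟨τ + 1, h1⟩, .inl i)) =
      Qk i ⟨τ + 1, h1⟩ (xi τ) (a τ) (xi ⟨τ + 1, h1⟩) := by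
  have hprev : (⟨τ + 1 - 1, by omega⟩ : Fin T) = τ := Fin.ext (Nat.add_sub_cancel _ _)
  simp only [kernel, Nat.add_one_ne_zero, dif_neg, not_false_eq_true]
  rw [hprev, pinRef_type, pinRef_type]
  rfl

variable [∀ i, Fintype (X i)] [∀ i, Fintype (A i)]

instance (p : Idx N T) : Fintype (Coord X A p) := by
  rcases p with ⟨t, j | j⟩
  · exact inferInstanceAs (Fintype (X j))
  · exact inferInstanceAs (Fintype (A j))

lemma sum_kernel_eq_one {g : Strat N T X A} (hK : StochKer N T X A Q1 Qk)
    (hg : Stochastic N T X A g) (p : Idx N T) (v : Config T X A) :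
    ∑ b, kernel Q1 Qk g p v b = 1 := by
  rcases p with ⟨t, j | j⟩
  · by_cases ht : (t : ℕ) = 0
    · simp only [kernel, ht, dif_pos]
      exact (hK.1 j).2
    · simp only [kernel, ht, dif_neg, not_false_eq_true]
      exact (hK.2 j t _ _).2
  · exact (hg j t _ _).2

def pinnedMass (g : Strat N T X A) (c : Config T X A) (i : Fin N) (τ n : ℕ) : ℝ :=
  ∑ v : Config T X A,
    if ∀ p, IsPinned i τ n p → v p = c p then ∏ p, kernel Q1 Qk g p v (v p) else 0

def residualMass (g : Strat N T X A) (c : Config T X A) (i : Fin N) (τ n : ℕ) : ℝ :=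
  ∑ v : Config T X A,
    if ∀ p, IsPinned i τ n p → v p = c p then ∏ p ∈ (ownPins i τ n)ᶜ, kernel Q1 Qk g p v (v p)
    else 0

lemma pinnedMass_eq {g : Strat N T X A} (hgc : Causal N T X A g) (c : Config T X A) (i : Fin N)
    {τ n : ℕ} (hτn : τ ≤ n) :
    pinnedMass Q1 Qk g c i τ n =
      (∏ p ∈ ownPins i τ n, kernel Q1 Qk g p c (c p)) * residualMass Q1 Qk g c i τ n := by
  rw [pinnedMass, residualMass, Finset.mul_sum]
  refine Finset.sum_congr rfl fun v _ => ?_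
  split_ifs with hv
  · rw [← Finset.prod_mul_prod_compl (ownPins i τ n)]
    congr 1
    refine Finset.prod_congr rfl fun p hp => ?_
    obtain ⟨hpin, hown⟩ := (Finset.mem_filter.1 hp).2
    rw [hv p hpin]
    exact congrFun (kernel_dependsOn Q1 Qk hgc p
      fun q hq => hv q (isPinned_of_isParent hτn hpin hown hq)) (c p)
  · rw [mul_zero]

lemma residualMass_eq_sum (g : Strat N T X A) (c : Config T X A) (i : Fin N) (τ n : ℕ) :
    residualMass Q1 Qk g c i τ n =
      ∑ v, othersWeight Q1 Qk g c i τ n v *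
        ((if ∀ p ∈ typePins i τ n, v p = c p then 1 else 0) *
          ∏ p ∈ future i τ n, kernel Q1 Qk g p v (v p)) := by
  have hcompl :
      (ownPins i τ n : Finset (Idx N T))ᶜ = othersBefore i n ∪ future i τ n := by
    ext p
    simp only [future, ownPins, othersBefore, Finset.mem_compl, Finset.mem_union,
      Finset.mem_filter, Finset.mem_univ, true_and]
    tauto
  have hdisj : Disjoint (othersBefore i n : Finset (Idx N T)) (future i τ n) :=
    Finset.disjoint_right.2 fun p hp hpo => Finset.mem_compl.1 hp (Finset.mem_union_right _ hpo)
  have hpins : ∀ v : Config T X A, (∀ p, IsPinned i τ n p → v p = c p) ↔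
      (∀ p, IsPinned i τ n p → p.2.isRight → v p = c p) ∧ ∀ p ∈ typePins i τ n, v p = c p := by
    intro v
    simp only [typePins, Finset.mem_filter, Finset.mem_univ, true_and]
    refine ⟨fun h => ⟨fun p hp _ => h p hp, fun p hp => h p hp.1⟩, fun h p hp => ?_⟩
    rcases hside : p.2 with j | j
    · exact h.2 p ⟨hp, by simp [hside]⟩
    · exact h.1 p hp (by simp [hside])
  refine Finset.sum_congr rfl fun v _ => ?_
  rw [othersWeight, hcompl, Finset.prod_union hdisj]
  by_cases hv : ∀ p, IsPinned i τ n p → v p = c p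
  · rw [if_pos hv, if_pos ((hpins v).1 hv).1, if_pos ((hpins v).1 hv).2]
    ring
  · rw [if_neg hv]
    by_cases ha : ∀ p, IsPinned i τ n p → p.2.isRight → v p = c p
    · rw [if_neg fun ht => hv ((hpins v).2 ⟨ha, ht⟩)]
      ring
    · rw [if_neg ha]
      ring

lemma residualMass_congr {g ĝ : Strat N T X A} {i : Fin N} (hK : StochKer N T X A Q1 Qk)
    (hg : Stochastic N T X A g) (hgc : Causal N T X A g)
    (hĝ : Stochastic N T X A ĝ) (hĝc : Causal N T X A ĝ) (hagree : ∀ j, j ≠ i → g j = ĝ j)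
    {c c' : Config T X A} (hc : ∀ t j, c (t, .inr j) = c' (t, .inr j)) (τ n : ℕ) :
    residualMass Q1 Qk g c i τ n = residualMass Q1 Qk ĝ c' i τ n := by
  have hdisj : Disjoint (typePins i τ n : Finset (Idx N T)) (future i τ n) := by
    refine Finset.disjoint_left.2 fun p hp hpf => Finset.mem_compl.1 hpf ?_
    simp only [typePins, Finset.mem_filter, Finset.mem_univ, true_and] at hp
    rcases p with ⟨t, j | j⟩
    · exact Finset.mem_union_left _ (Finset.mem_filter.2 ⟨Finset.mem_univ _, hp.1, hp.1.1⟩)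
    · simp at hp
  rw [residualMass_eq_sum, residualMass_eq_sum,
    sum_mul_pin_mul_prod_kernel_congr rank _ (kernel Q1 Qk ĝ) hdisj c c'
      (fun p _ => (kernel_dependsOn Q1 Qk hgc p).mono fun _ => IsParent.rank_lt)
      (fun p _ => (kernel_dependsOn Q1 Qk hĝc p).mono fun _ => IsParent.rank_lt)
      (fun p _ => sum_kernel_eq_one Q1 Qk hK hg p)
      (fun p _ => sum_kernel_eq_one Q1 Qk hK hĝ p)
      (othersWeight_dependsOn Q1 Qk hgc c i τ n),
    othersWeight_congr Q1 Qk hagree hc]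

end Network

section Conditioning

variable {N T : ℕ} {X A : Fin N → Type} [∀ i, Fintype (X i)] [∀ i, Fintype (A i)]
variable (Q1 : ∀ i, X i → ℝ) (Qk : ∀ i, Fin T → X i → (∀ j, A j) → X i → ℝ)

lemma den1_eq_pinnedMass (g : Strat N T X A) (x₀ : Fin T → ∀ j, X j) (i : Fin N) (τ : Fin T)
    (a : Fin T → ∀ j, A j) (xi : Fin T → X i) :
    den1 N T X A Q1 Qk g i τ a xi = pinnedMass Q1 Qk g (pinRef x₀ i xi a) i τ τ := by
  rw [den1, pinnedMass, ← Fintype.sum_prod_type', ← Equiv.sum_comp trajEquiv]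
  refine Finset.sum_congr rfl fun v _ => if_congr ?_ (trajP_trajEquiv Q1 Qk g v) rfl
  constructor
  · rintro ⟨ha, haτ, hx⟩ ⟨t, j | j⟩ hp
    · obtain ⟨rfl, ht⟩ := hp
      exact (hx t ht).trans (pinRef_type x₀ j xi a t).symm
    · rcases hp with ht | ⟨rfl, ht⟩
      · exact congrFun (ha t ht) j
      · rcases (Nat.lt_or_eq_of_le ht) with ht | ht
        · exact congrFun (ha t ht) j
        · rw [Fin.ext ht]
          exact haτ
  · intro h
    refine ⟨fun s hs => funext fun j => h (s, .inr j) (Or.inl hs),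
      h (τ, .inr i) (Or.inr ⟨rfl, le_rfl⟩), fun s hs => ?_⟩
    exact (h (s, .inl i) ⟨rfl, hs⟩).trans (pinRef_type x₀ i xi a s)

lemma num1_eq_pinnedMass (g : Strat N T X A) (x₀ : Fin T → ∀ j, X j) (i : Fin N) (τ : Fin T)
    (h1 : (τ : ℕ) + 1 < T) (a : Fin T → ∀ j, A j) (xi : Fin T → X i) :
    num1 N T X A Q1 Qk g i τ h1 a xi = pinnedMass Q1 Qk g (pinRef x₀ i xi a) i τ (τ + 1) := by
  rw [num1, pinnedMass, ← Fintype.sum_prod_type', ← Equiv.sum_comp trajEquiv]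
  refine Finset.sum_congr rfl fun v _ => if_congr ?_ (trajP_trajEquiv Q1 Qk g v) rfl
  constructor
  · rintro ⟨ha, haτ, hx⟩ ⟨t, j | j⟩ hp
    · obtain ⟨rfl, ht⟩ := hp
      exact (hx t ht).trans (pinRef_type x₀ j xi a t).symm
    · have ht : (t : ℕ) ≤ τ := by rcases hp with ht | ⟨-, ht⟩ <;> omega
      rcases (Nat.lt_or_eq_of_le ht) with ht | ht
      · exact congrFun (ha t ht) j
      · rw [Fin.ext ht]
        exact congrFun haτ j
  · intro h
    refine ⟨fun s hs => funext fun j => h (s, .inr j) (Or.inl (by omega)),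
      funext fun j => h (τ, .inr j) (Or.inl (by omega)), fun s hs => ?_⟩
    exact (h (s, .inl i) ⟨rfl, hs⟩).trans (pinRef_type x₀ i xi a s)

lemma ownPins_succ (i : Fin N) (τ : Fin T) (h1 : (τ : ℕ) + 1 < T) :
    ownPins i τ (τ + 1) = insert (⟨τ + 1, h1⟩, .inl i) (ownPins i τ τ : Finset (Idx N T)) := by
  ext ⟨t, j | j⟩ <;>
    simp only [ownPins, Finset.mem_insert, Finset.mem_filter, Finset.mem_univ, true_and,
      IsPinned, Idx.player, Sum.elim_inl, Sum.elim_inr, id, Prod.mk.injEq, Sum.inl.injEq,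
      reduceCtorEq, and_false, false_or, Fin.ext_iff] <;>
    omega

lemma cond1_eq {g : Strat N T X A} (hgc : Causal N T X A g) (x₀ : Fin T → ∀ j, X j) (i : Fin N)
    (τ : Fin T) (h1 : (τ : ℕ) + 1 < T) (a : Fin T → ∀ j, A j) (xi : Fin T → X i)
    (hpos : 0 < den1 N T X A Q1 Qk g i τ a xi) :
    cond1 N T X A Q1 Qk g i τ h1 a xi =
      Qk i ⟨τ + 1, h1⟩ (xi τ) (a τ) (xi ⟨τ + 1, h1⟩) *
        residualMass Q1 Qk g (pinRef x₀ i xi a) i τ (τ + 1) /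
          residualMass Q1 Qk g (pinRef x₀ i xi a) i τ τ := by
  set c := pinRef x₀ i xi a
  set W := ∏ p ∈ ownPins i τ τ, kernel Q1 Qk g p c (c p)
  have hden : den1 N T X A Q1 Qk g i τ a xi = W * residualMass Q1 Qk g c i τ τ := by
    rw [den1_eq_pinnedMass Q1 Qk g x₀, pinnedMass_eq Q1 Qk hgc c i le_rfl]
  have hnum : num1 N T X A Q1 Qk g i τ h1 a xi =
      Qk i ⟨τ + 1, h1⟩ (xi τ) (a τ) (xi ⟨τ + 1, h1⟩) * W *
        residualMass Q1 Qk g c i τ (τ + 1) := by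
    have hnew : ((⟨τ + 1, h1⟩, .inl i) : Idx N T) ∉ ownPins i τ τ := fun h => by
      have h' := (Finset.mem_filter.1 h).2.1
      simp only [IsPinned] at h'
      omega
    rw [num1_eq_pinnedMass Q1 Qk g x₀, pinnedMass_eq Q1 Qk hgc c i (Nat.le_succ _),
      ownPins_succ i τ h1, Finset.prod_insert hnew, kernel_pinRef_next]
  have hW : W ≠ 0 := by
    rintro hW
    rw [hden, hW, zero_mul] at hpos
    exact lt_irrefl 0 hpos
  rw [cond1, hnum, hden, mul_right_comm, mul_comm W, mul_div_mul_right _ _ hW]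

end Conditioning

/-- for fixed `g^{-i}`, the pair `((a_{1:t-1}, x_t^i), a_t^i)` is a
controlled Markov process: the conditional law of `(a_{1:t}, x_{t+1}^i)` given
`(a_{1:t-1}, x_{1:t}^i, a_t^i)` depends only on `(a_{1:t-1}, x_t^i, a_t^i)` and on
`g^{-i}` — not on player `i`'s own strategy or earlier types. -/
theorem controlled_markov_property
    (g ghat : Strat N T X A) (i : Fin N)
    (hK : StochKer N T X A Q1 Qk)
    (hg : Stochastic N T X A g) (hgc : Causal N T X A g)
    (hh : Stochastic N T X A ghat) (hhc : Causal N T X A ghat)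
    (hagree : ∀ j : Fin N, j ≠ i → g j = ghat j)
    (τ : Fin T) (h1 : (τ : ℕ) + 1 < T)
    (a : Fin T → ∀ j, A j) (xi xihat : Fin T → X i)
    (hx : xi τ = xihat τ) (hx' : xi ⟨(τ : ℕ) + 1, h1⟩ = xihat ⟨(τ : ℕ) + 1, h1⟩)
    (hpos : 0 < den1 N T X A Q1 Qk g i τ a xi)
    (hpos' : 0 < den1 N T X A Q1 Qk ghat i τ a xihat) :
    cond1 N T X A Q1 Qk g i τ h1 a xi = cond1 N T X A Q1 Qk ghat i τ h1 a xihat := by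
  obtain ⟨x₀⟩ : Nonempty (Fin T → ∀ j, X j) := by
    by_contra hempty
    rw [not_nonempty_iff] at hempty
    simp [den1] at hpos
  have hc : ∀ t j, pinRef x₀ i xi a (t, .inr j) = pinRef x₀ i xihat a (t, .inr j) :=
    fun _ _ => rfl
  rw [cond1_eq Q1 Qk hgc x₀ i τ h1 a xi hpos, cond1_eq Q1 Qk hhc x₀ i τ h1 a xihat hpos',
    hx, hx',
    residualMass_congr Q1 Qk hK hg hgc hh hhc hagree hc,
    residualMass_congr Q1 Qk hK hg hgc hh hhc hagree hc]

end DynGame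
end
end

section
/- The conditional probability s_t^i(a_t^i | a_{1:t-1}, x_t^i) := P^g(a_t^i | a_{1:t-1}, x_t^i) depends on the strategy profile g only through player i's own strategy g^i; explicitly, s_t^i(a_t^i | a_{1:t-1}, x_t^i) = [Σ_{x_{1:t-1}^i} P^{g^i}(x_{1:t}^i | a_{1:t-1}) g_t^i(a_t^i | a_{1:t-1}, x_{1:t}^i)] / [Σ_{ã_t^i} Σ_{x̃_{1:t-1}^i} P^{g^i}(x̃_{1:t-1}^i, x_t^i | a_{1:t-1}) g_t^i(ã_t^i | a_{1:t-1}, x̃_{1:t-1}^i x_t^i)]. -/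
/-!
Summing the trajectory weight over everything that happens after period `τ` leaves the weight
of the history up to `τ`: later kernels and strategies are probability distributions, so the
periods can be marginalized one at a time from the last one down, with the already summed
coordinates pinned to arbitrary values. Summing also over the period-`τ` actions of the other
players, the weight of `(x_{1:τ}, a_{1:τ-1}, a_τ^i)` is `∏ j, pfac j (x^j) * g_τ^i (a_τ^i)`,
a product over players. Hence `sNum`, as a function of `a_τ^i`, is the player-`i` sum of the
claim times a factor that does not depend on `a_τ^i` (the other players' weights, divided by the
number of pinned future type histories), and this factor cancels in the ratio because `sDen` is
the sum of `sNum` over `a_τ^i`.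
-/

open scoped Classical BigOperators

noncomputable section

namespace DynGame

variable (N T : ℕ) (X A : Fin N → Type)
  [∀ i, Fintype (X i)] [∀ i, Fintype (A i)]

variable (Q1 : ∀ i, X i → ℝ) (Qk : ∀ i, Fin T → X i → (∀ j, A j) → X i → ℝ)

/-- Numerator for the structured strategy: `P^g(a_{1:t-1}, x_t^i, a_t^i)`. -/
def sNum (g : Strat N T X A) (i : Fin N) (τ : Fin T)
    (a : Fin T → ∀ j, A j) (xiv : X i) (ai : A i) : ℝ :=
  ∑ x' : Fin T → ∀ j, X j, ∑ a' : Fin T → ∀ j, A j,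
    if (∀ s : Fin T, (s : ℕ) < (τ : ℕ) → a' s = a s) ∧ x' τ i = xiv ∧ a' τ i = ai
    then trajP N T X A Q1 Qk g x' a' else 0

/-- Denominator: `P^g(a_{1:t-1}, x_t^i)`. -/
def sDen (g : Strat N T X A) (i : Fin N) (τ : Fin T)
    (a : Fin T → ∀ j, A j) (xiv : X i) : ℝ :=
  ∑ x' : Fin T → ∀ j, X j, ∑ a' : Fin T → ∀ j, A j,
    if (∀ s : Fin T, (s : ℕ) < (τ : ℕ) → a' s = a s) ∧ x' τ i = xiv
    then trajP N T X A Q1 Qk g x' a' else 0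

/-- The structured strategy `s_t^i(a_t^i | a_{1:t-1}, x_t^i) := P^g(a_t^i | a_{1:t-1}, x_t^i)`,
viewed as a history-based strategy that ignores all of `x_{1:t-1}^i`. -/
def sStrat (g : Strat N T X A) (i : Fin N) :
    Fin T → (Fin T → ∀ j, A j) → (Fin T → X i) → A i → ℝ :=
  fun τ a xi ai => sNum N T X A Q1 Qk g i τ a (xi τ) ai / sDen N T X A Q1 Qk g i τ a (xi τ)

/-- Player-`i`-only unnormalized weight of `(x_{1:t}^i, a_{1:t-1})` (the factor
`Q_1^i(x_1^i) ∏_{n=2}^t Q_n^i(x_n^i|x_{n-1}^i,a_{n-1}) ∏_{n=1}^{t-1} g_n^i(a_n^i|a_{1:n-1},x_{1:n}^i)`,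
which depends on the profile only through `g^i`); `τ` is the 0-based index of period `t`. -/
def pfac (g : Strat N T X A) (i : Fin N) (τ : Fin T)
    (xi : Fin T → X i) (a : Fin T → ∀ j, A j) : ℝ :=
  (if h : 0 < T then Q1 i (xi ⟨0, h⟩) else 1) *
  ∏ s : Fin T,
    ((if (s : ℕ) < (τ : ℕ) then g i s a xi (a s i) else 1) *
     (if h2 : (s : ℕ) + 1 ≤ (τ : ℕ) ∧ (s : ℕ) + 1 < T then
        Qk i ⟨(s : ℕ) + 1, h2.2⟩ (xi s) (a s) (xi ⟨(s : ℕ) + 1, h2.2⟩) else 1))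

section FiniteSums

variable {ι : Type*} [Fintype ι] [DecidableEq ι] {β : ι → Type*} [∀ i, Fintype (β i)]
  {M R : Type*} [AddCommMonoid M]

theorem sum_eq_sum_ite_sum_update (m : ι) (d : β m) (φ : (∀ i, β i) → M) :
    ∑ f, φ f = ∑ f, if f m = d then ∑ v, φ (Function.update f m v) else 0 := by
  let e := Equiv.piSplitAt m β
  have hupd : ∀ c v w, Function.update (e.symm (c, w)) m v = e.symm (v, w) := by
    intro c v w
    ext j
    by_cases hj : j = m
    · subst hj; simp [e]
    · simp [e, hj]
  rw [← e.symm.sum_comp φ,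
    ← e.symm.sum_comp (fun f => if f m = d then ∑ v, φ (Function.update f m v) else 0),
    Fintype.sum_prod_type, Fintype.sum_prod_type]
  simp only [e, hupd, Equiv.piSplitAt_symm_apply, ↓reduceDIte, Finset.sum_ite_irrel,
    Finset.sum_const_zero, Finset.sum_ite_eq', Finset.mem_univ, ↓reduceIte]
  exact Finset.sum_comm

theorem sum_sum_eq_sum_sum_ite_update {γ : ι → Type*} [∀ i, Fintype (γ i)] (m : ι) (d : β m)
    (e : γ m) (φ : (∀ i, β i) → (∀ i, γ i) → M) :
    ∑ f, ∑ h, φ f h = ∑ f, ∑ h, if f m = d ∧ h m = e then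
      ∑ v, ∑ w, φ (Function.update f m v) (Function.update h m w) else 0 := by
  rw [sum_eq_sum_ite_sum_update m d]
  refine Finset.sum_congr rfl fun f _ => ?_
  by_cases hf : f m = d
  · rw [if_pos hf, Finset.sum_comm, sum_eq_sum_ite_sum_update m e]
    simp only [hf, true_and]
    simp_rw [Finset.sum_comm (s := Finset.univ (α := γ m))]
  · simp [hf]

-- The condition is a parameter `P` rather than written out so that the lemma rewrites a sum
-- whatever `Decidable` instance its `if` carries; likewise in `sum_eq_card_smul_sum_ite`.
theorem sum_ite_eq_sum_update (m : ι) (d : ∀ i, β i) (φ : (∀ i, β i) → M)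
    (P : (∀ i, β i) → Prop) [DecidablePred P] (hP : ∀ f, P f ↔ ∀ j, j ≠ m → f j = d j) :
    ∑ f, (if P f then φ f else 0) = ∑ v, φ (Function.update d m v) := by
  rw [sum_eq_sum_ite_sum_update m (d m)]
  refine (Finset.sum_congr rfl fun f _ => ?_).trans
    (Fintype.sum_ite_eq' d fun _ => ∑ v, φ (Function.update d m v))
  by_cases hf : f = d
  · subst hf
    simp +contextual [hP, Function.update_of_ne]
  · have hoff : f m = d m → ¬ ∀ j, j ≠ m → f j = d j := fun hm hoff =>
      hf (funext fun j => if hj : j = m then hj ▸ hm else hoff j hj)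
    simp +contextual [hP, hf, hoff, Function.update_of_ne]

theorem sum_eq_card_smul_sum_ite (p : ι → Prop) [DecidablePred p] (d : ∀ i, β i)
    (Ψ : (∀ i, β i) → M) (hΨ : ∀ f f', (∀ i, ¬ p i → f i = f' i) → Ψ f = Ψ f')
    (P : (∀ i, β i) → Prop) [DecidablePred P] (hP : ∀ f, P f ↔ ∀ i, p i → f i = d i) :
    ∑ f, Ψ f = Fintype.card (∀ i : {i // p i}, β i) • ∑ f, (if P f then Ψ f else 0) := by
  let e := Equiv.piEquivPiSubtypeProd p β
  rw [← e.symm.sum_comp Ψ, ← e.symm.sum_comp (fun f => if P f then Ψ f else 0),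
    Fintype.sum_prod_type, Fintype.sum_prod_type]
  set dp : ∀ i : {i // p i}, β i := fun i => d i
  have hfree : ∀ u w, Ψ (e.symm (u, w)) = Ψ (e.symm (dp, w)) := fun u w =>
    hΨ _ _ fun i hi => by simp [e, hi]
  have hpin : ∀ u w, P (e.symm (u, w)) ↔ u = dp := by
    intro u w
    rw [hP]
    refine ⟨fun h => funext fun i => ?_, fun h i hi => ?_⟩
    · simpa [e, i.2] using h i i.2
    · simp [e, hi, h, dp]
  simp only [hfree, hpin, Finset.sum_const, Finset.card_univ]
  simp

theorem sum_apply_mul_eq_sum_mul_sum [NonUnitalNonAssocSemiring R] (i : ι) (φ : β i → R)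
    (ψ : (∀ j : {j // j ≠ i}, β j) → R) :
    ∑ y : ∀ j, β j, φ (y i) * ψ (fun j => y j) = (∑ c, φ c) * ∑ w, ψ w := by
  rw [Finset.sum_mul_sum, ← Fintype.sum_prod_type']
  exact (Equiv.piSplitAt i β).sum_comp (fun p => φ p.1 * ψ p.2)

theorem sum_ite_eq_mul_prod_sum [CommSemiring R] (i : ι) (b : β i) (h : ∀ j, β j → R) :
    ∑ v : ∀ j, β j, (if v i = b then ∏ j, h j (v j) else 0)
      = h i b * ∏ j : {j // j ≠ i}, ∑ c, h j c := by
  have hsplit : ∀ v : ∀ j, β j, (if v i = b then ∏ j, h j (v j) else 0)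
      = (if v i = b then h i (v i) else 0) * ∏ j : {j // j ≠ i}, h j (v j) := by
    intro v
    rw [Fintype.prod_eq_mul_prod_subtype_ne _ i, ite_mul, zero_mul]
  simp_rw [hsplit]
  rw [sum_apply_mul_eq_sum_mul_sum i (fun c => if c = b then h i c else 0)
    (fun w => ∏ j : {j // j ≠ i}, h j (w j)), Fintype.sum_ite_eq', Fintype.prod_sum]

end FiniteSums

section Marginalization

variable {N T X A}

def AgreeAfter {β : Type*} (τ : Fin T) (x y : Fin T → β) : Prop :=
  ∀ s : Fin T, (τ : ℕ) < s → x s = y s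

theorem agreeAfter_update_iff {β : Type*} {q : Fin T} {x y : Fin T → β} {w : β} :
    AgreeAfter q (Function.update x q w) y ↔ AgreeAfter q x y :=
  forall₂_congr fun s hs => by rw [Function.update_of_ne (fun h => by subst h; omega)]

theorem agreeAfter_iff_of_succ {β : Type*} {p q : Fin T} (hpq : (q : ℕ) = p + 1)
    {x y : Fin T → β} : AgreeAfter p x y ↔ AgreeAfter q x y ∧ x q = y q := by
  refine ⟨fun h => ⟨fun s hs => h s (by omega), h q (by omega)⟩, fun ⟨h, hq⟩ s hs => ?_⟩
  rcases eq_or_ne s q with rfl | hsq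
  · exact hq
  · exact h s (by have := Fin.val_ne_of_ne hsq; omega)

theorem agreeAfter_of_succ_eq {β : Type*} {τ : Fin T} (hτ : (τ : ℕ) + 1 = T)
    (x y : Fin T → β) : AgreeAfter τ x y :=
  fun s hs => absurd s.isLt (by omega)

def prefixWeight (g : Strat N T X A) (τ : Fin T) (x : Fin T → ∀ j, X j)
    (a : Fin T → ∀ j, A j) : ℝ :=
  (∏ j, pfac N T X A Q1 Qk g j τ (fun s => x s j) a) * ∏ j, g j τ a (fun s => x s j) (a τ j)

variable {Q1 Qk}

omit [∀ i, Fintype (X i)] [∀ i, Fintype (A i)] in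
theorem pfac_congr {g : Strat N T X A} (hc : Causal N T X A g) (j : Fin N) (τ : Fin T)
    {z z' : Fin T → X j} {a a' : Fin T → ∀ k, A k}
    (hz : ∀ s : Fin T, (s : ℕ) ≤ τ → z s = z' s) (ha : ∀ s : Fin T, (s : ℕ) < τ → a s = a' s) :
    pfac N T X A Q1 Qk g j τ z a = pfac N T X A Q1 Qk g j τ z' a' := by
  unfold pfac
  congr 1
  · split_ifs with h
    · rw [hz ⟨0, h⟩ (Nat.zero_le _)]
    · rfl
  · refine Finset.prod_congr rfl fun s _ => ?_
    congr 1
    · split_ifs with hs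
      · rw [hc j s a a' z z' (fun t ht => ha t (by omega)) (fun t ht => hz t (by omega)),
          ha s hs]
      · rfl
    · split_ifs with hs
      · rw [hz s (by omega), hz _ hs.1, ha s (by omega)]
      · rfl

omit [∀ i, Fintype (X i)] [∀ i, Fintype (A i)] in
theorem pfac_succ (g : Strat N T X A) (j : Fin N) {p q : Fin T} (hpq : (q : ℕ) = p + 1)
    (z : Fin T → X j) (a : Fin T → ∀ k, A k) :
    pfac N T X A Q1 Qk g j q z a
      = pfac N T X A Q1 Qk g j p z a * (g j p a z (a p j) * Qk j q (z p) (a p) (z q)) := by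
  unfold pfac
  have hpT : (p : ℕ) + 1 < T := hpq ▸ q.isLt
  have key : ∀ s : Fin T,
      ((if (s : ℕ) < q then g j s a z (a s j) else 1) *
        if h : (s : ℕ) + 1 ≤ q ∧ (s : ℕ) + 1 < T then
          Qk j ⟨s + 1, h.2⟩ (z s) (a s) (z ⟨s + 1, h.2⟩) else 1)
      = ((if (s : ℕ) < p then g j s a z (a s j) else 1) *
          if h : (s : ℕ) + 1 ≤ p ∧ (s : ℕ) + 1 < T then
            Qk j ⟨s + 1, h.2⟩ (z s) (a s) (z ⟨s + 1, h.2⟩) else 1) *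
        if s = p then g j p a z (a p j) * Qk j q (z p) (a p) (z q) else 1 := by
    intro s
    by_cases hs : s = p
    · subst hs
      have hq : (⟨s + 1, hpT⟩ : Fin T) = q := Fin.ext hpq.symm
      simp [hpq, hpT, hq]
    · have hs' : (s : ℕ) ≠ p := fun h => hs (Fin.ext h)
      have h1 : (s : ℕ) < q ↔ (s : ℕ) < p := by omega
      have h2 : (s : ℕ) + 1 ≤ q ↔ (s : ℕ) + 1 ≤ p := by omega
      simp only [h1, h2, hs, if_false, mul_one]
  rw [Finset.prod_congr rfl fun s _ => key s, Finset.prod_mul_distrib, Fintype.prod_ite_eq',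
    mul_assoc]

omit [∀ i, Fintype (X i)] [∀ i, Fintype (A i)] in
theorem prefixWeight_congr {g : Strat N T X A} (hc : Causal N T X A g) (τ : Fin T)
    {x x' : Fin T → ∀ j, X j} {a a' : Fin T → ∀ j, A j}
    (hx : ∀ s : Fin T, (s : ℕ) ≤ τ → x s = x' s) (ha : ∀ s : Fin T, (s : ℕ) ≤ τ → a s = a' s) :
    prefixWeight Q1 Qk g τ x a = prefixWeight Q1 Qk g τ x' a' := by
  unfold prefixWeight
  congr 1 <;> refine Finset.prod_congr rfl fun j _ => ?_
  · exact pfac_congr hc j τ (fun s hs => congrFun (hx s hs) j) (fun s hs => ha s hs.le)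
  · rw [hc j τ a a' _ (fun s => x' s j) (fun s hs => ha s hs.le)
      (fun s hs => congrFun (hx s hs) j), ha τ le_rfl]

omit [∀ i, Fintype (X i)] [∀ i, Fintype (A i)] in
theorem prefixWeight_succ (g : Strat N T X A) {p q : Fin T} (hpq : (q : ℕ) = p + 1)
    (x : Fin T → ∀ j, X j) (a : Fin T → ∀ j, A j) :
    prefixWeight Q1 Qk g q x a = prefixWeight Q1 Qk g p x a *
      ((∏ j, Qk j q (x p j) (a p) (x q j)) * ∏ j, g j q a (fun s => x s j) (a q j)) := by
  unfold prefixWeight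
  simp only [pfac_succ g _ hpq, Finset.prod_mul_distrib]
  ring

omit [∀ i, Fintype (X i)] [∀ i, Fintype (A i)] in
theorem trajP_eq_prefixWeight (g : Strat N T X A) {τ : Fin T} (hτ : (τ : ℕ) + 1 = T)
    (x : Fin T → ∀ j, X j) (a : Fin T → ∀ j, A j) :
    trajP N T X A Q1 Qk g x a = prefixWeight Q1 Qk g τ x a := by
  have hT : 0 < T := by omega
  have key : ∀ t : Fin T,
      (∏ j, g j t a (fun s => x s j) (a t j)) *
        (∏ j, if h : (t : ℕ) + 1 < T then
          Qk j ⟨t + 1, h⟩ (x t j) (a t) (x ⟨t + 1, h⟩ j) else 1)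
      = (∏ j, (if (t : ℕ) < τ then g j t a (fun s => x s j) (a t j) else 1) *
          if h : (t : ℕ) + 1 ≤ τ ∧ (t : ℕ) + 1 < T then
            Qk j ⟨t + 1, h.2⟩ (x t j) (a t) (x ⟨t + 1, h.2⟩ j) else 1) *
        if t = τ then ∏ j, g j τ a (fun s => x s j) (a τ j) else 1 := by
    intro t
    by_cases ht : t = τ
    · subst ht
      simp [hτ]
    · have htτ : (t : ℕ) < τ := by have := t.isLt; have := Fin.val_ne_of_ne ht; omega
      have h2 : (t : ℕ) + 1 ≤ τ ∧ (t : ℕ) + 1 < T ↔ (t : ℕ) + 1 < T := by omega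
      simp only [htτ, h2, ht, if_true, if_false, mul_one, Finset.prod_mul_distrib]
  unfold trajP prefixWeight pfac
  rw [dif_pos hT, Finset.prod_congr rfl fun t _ => key t, Finset.prod_mul_distrib,
    Fintype.prod_ite_eq', Finset.prod_comm, ← mul_assoc, ← Finset.prod_mul_distrib]
  simp only [dif_pos hT]

omit [∀ i, Fintype (X i)] [∀ i, Fintype (A i)] in
theorem prefixWeight_update_succ {g : Strat N T X A} (hc : Causal N T X A g) {p q : Fin T}
    (hpq : (q : ℕ) = p + 1) (x : Fin T → ∀ j, X j) (a : Fin T → ∀ j, A j)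
    (w : ∀ j, X j) (v : ∀ j, A j) :
    prefixWeight Q1 Qk g q (Function.update x q w) (Function.update a q v)
      = prefixWeight Q1 Qk g p x a * ((∏ j, Qk j q (x p j) (a p) (w j)) *
          ∏ j, g j q a (fun s => Function.update x q w s j) (v j)) := by
  have hne : ∀ s : Fin T, (s : ℕ) < q → s ≠ q := fun s hs h => by omega
  rw [prefixWeight_succ g hpq, prefixWeight_congr hc p
    (fun s hs => Function.update_of_ne (hne s (by omega)) w x)
    (fun s hs => Function.update_of_ne (hne s (by omega)) v a)]
  simp only [Function.update_self, Function.update_of_ne (hne p (by omega))]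
  congr 3
  funext j
  rw [hc j q (Function.update a q v) a _ _ (fun s hs => Function.update_of_ne (hne s hs) v a)
    (fun _ _ => rfl)]

theorem sum_prefixWeight_succ {g : Strat N T X A} (hK : StochKer N T X A Q1 Qk)
    (hg : Stochastic N T X A g) (hc : Causal N T X A g) {p q : Fin T} (hpq : (q : ℕ) = p + 1)
    (D : (Fin T → ∀ j, X j) → (Fin T → ∀ j, A j) → Prop) [∀ x a, Decidable (D x a)]
    (hD : ∀ x a w v, D (Function.update x q w) (Function.update a q v) ↔ D x a)
    (xd : ∀ j, X j) (ad : ∀ j, A j) :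
    ∑ x, ∑ a, (if D x a then prefixWeight Q1 Qk g q x a else 0)
      = ∑ x, ∑ a, (if D x a ∧ x q = xd ∧ a q = ad then prefixWeight Q1 Qk g p x a else 0) := by
  have hfiber : ∀ x a, ∑ w, ∑ v,
      prefixWeight Q1 Qk g q (Function.update x q w) (Function.update a q v)
        = prefixWeight Q1 Qk g p x a := by
    intro x a
    simp only [prefixWeight_update_succ hc hpq, ← Finset.mul_sum, ← Fintype.prod_sum,
      (hg _ _ _ _).2, (hK.2 _ _ _ _).2, Finset.prod_const_one, mul_one]
  rw [sum_sum_eq_sum_sum_ite_update q xd ad]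
  refine Finset.sum_congr rfl fun x _ => Finset.sum_congr rfl fun a _ => ?_
  by_cases hDxa : D x a
  · simp [hD, hDxa, hfiber]
  · simp [hD, hDxa]

theorem sum_prefixWeight_agreeAfter_succ {g : Strat N T X A} (hK : StochKer N T X A Q1 Qk)
    (hg : Stochastic N T X A g) (hc : Causal N T X A g) {p q : Fin T} (hpq : (q : ℕ) = p + 1)
    (C : (Fin T → ∀ j, X j) → (Fin T → ∀ j, A j) → Prop) [∀ x a, Decidable (C x a)]
    (hC : ∀ x a w v, C (Function.update x q w) (Function.update a q v) ↔ C x a)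
    (xd : Fin T → ∀ j, X j) (ad : Fin T → ∀ j, A j) :
    ∑ x, ∑ a, (if C x a ∧ AgreeAfter q x xd ∧ AgreeAfter q a ad then
        prefixWeight Q1 Qk g q x a else 0)
      = ∑ x, ∑ a, (if C x a ∧ AgreeAfter p x xd ∧ AgreeAfter p a ad then
          prefixWeight Q1 Qk g p x a else 0) := by
  rw [sum_prefixWeight_succ hK hg hc hpq
    (fun x a => C x a ∧ AgreeAfter q x xd ∧ AgreeAfter q a ad)
    (fun x a w v => by simp only [hC, agreeAfter_update_iff]) (xd q) (ad q)]
  refine Finset.sum_congr rfl fun x _ => Finset.sum_congr rfl fun a _ => if_congr ?_ rfl rfl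
  rw [agreeAfter_iff_of_succ hpq, agreeAfter_iff_of_succ hpq]
  tauto

theorem sum_trajP_eq_sum_prefixWeight {g : Strat N T X A} (hK : StochKer N T X A Q1 Qk)
    (hg : Stochastic N T X A g) (hc : Causal N T X A g) (τ : Fin T)
    (C : (Fin T → ∀ j, X j) → (Fin T → ∀ j, A j) → Prop) [∀ x a, Decidable (C x a)]
    (hC : ∀ q : Fin T, (τ : ℕ) < q → ∀ x a w v,
      C (Function.update x q w) (Function.update a q v) ↔ C x a)
    (xd : Fin T → ∀ j, X j) (ad : Fin T → ∀ j, A j) :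
    ∑ x, ∑ a, (if C x a then trajP N T X A Q1 Qk g x a else 0)
      = ∑ x, ∑ a, (if C x a ∧ AgreeAfter τ x xd ∧ AgreeAfter τ a ad then
          prefixWeight Q1 Qk g τ x a else 0) := by
  suffices h : ∀ n (q : Fin T), (q : ℕ) = τ + n →
      ∑ x, ∑ a, (if C x a ∧ AgreeAfter q x xd ∧ AgreeAfter q a ad then
        prefixWeight Q1 Qk g q x a else 0)
      = ∑ x, ∑ a, (if C x a ∧ AgreeAfter τ x xd ∧ AgreeAfter τ a ad then
          prefixWeight Q1 Qk g τ x a else 0) by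
    let last : Fin T := ⟨τ + (T - 1 - τ), by omega⟩
    have hlast : (last : ℕ) + 1 = T := by simp only [last]; omega
    rw [← h _ last rfl]
    simp only [agreeAfter_of_succ_eq hlast, and_true, trajP_eq_prefixWeight g hlast]
  intro n
  induction n with
  | zero => intro q hq; rw [Fin.ext hq]
  | succ n ih =>
    intro q hq
    rw [sum_prefixWeight_agreeAfter_succ hK hg hc (p := ⟨τ + n, by omega⟩) hq C
      (hC q (by omega)) xd ad]
    exact ih _ rfl

omit [∀ i, Fintype (X i)] in
theorem sum_ite_prefixWeight_eq {g : Strat N T X A} (hg : Stochastic N T X A g)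
    (hc : Causal N T X A g) (i : Fin N) (τ : Fin T) (x : Fin T → ∀ j, X j)
    (a0 : Fin T → ∀ j, A j) (b : A i) :
    ∑ a, (if (∀ s, s ≠ τ → a s = a0 s) ∧ a τ i = b then prefixWeight Q1 Qk g τ x a else 0)
      = (∏ j, pfac N T X A Q1 Qk g j τ (fun s => x s j) a0) * g i τ a0 (fun s => x s i) b := by
  have hlt : ∀ s : Fin T, (s : ℕ) < τ → s ≠ τ := fun s hs h => by omega
  have hupd : ∀ v : ∀ j, A j, prefixWeight Q1 Qk g τ x (Function.update a0 τ v)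
      = (∏ j, pfac N T X A Q1 Qk g j τ (fun s => x s j) a0) *
          ∏ j, g j τ a0 (fun s => x s j) (v j) := by
    intro v
    unfold prefixWeight
    congr 1 <;> refine Finset.prod_congr rfl fun j _ => ?_
    · exact pfac_congr hc j τ (fun _ _ => rfl)
        (fun s hs => Function.update_of_ne (hlt s hs) v a0)
    · rw [Function.update_self, hc j τ _ a0 _ _
        (fun s hs => Function.update_of_ne (hlt s hs) v a0) (fun _ _ => rfl)]
  simp_rw [ite_and]
  rw [sum_ite_eq_sum_update τ a0 _ _ fun _ => Iff.rfl]
  simp only [Function.update_self, hupd, ← mul_ite_zero, ← Finset.mul_sum,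
    sum_ite_eq_mul_prod_sum, (hg _ _ _ _).2, Finset.prod_const_one, mul_one]

omit [∀ i, Fintype (A i)] in
theorem sum_ite_prod_pfac_eq_mul (g : Strat N T X A) (i : Fin N) (τ : Fin T)
    (a0 : Fin T → ∀ j, A j) (xiv : X i) (b : A i) :
    ∑ x : Fin T → ∀ j, X j, (if x τ i = xiv then
        (∏ j, pfac N T X A Q1 Qk g j τ (fun s => x s j) a0) * g i τ a0 (fun s => x s i) b else 0)
      = (∑ z : Fin T → X i, if z τ = xiv then
          pfac N T X A Q1 Qk g i τ z a0 * g i τ a0 z b else 0) *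
        ∑ w : ∀ j : {j // j ≠ i}, Fin T → X j,
          ∏ j : {j // j ≠ i}, pfac N T X A Q1 Qk g j τ (w j) a0 := by
  refine (Fintype.sum_equiv (Equiv.piComm fun (_ : Fin T) (j : Fin N) => X j) _ _
    fun x => ?_).trans (sum_apply_mul_eq_sum_mul_sum (β := fun j => Fin T → X j) i _ _)
  rw [Fintype.prod_eq_mul_prod_subtype_ne _ i, ite_mul, zero_mul, mul_right_comm]
  rfl

theorem sDen_eq_sum_sNum (g : Strat N T X A) (i : Fin N) (τ : Fin T) (a : Fin T → ∀ j, A j)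
    (xiv : X i) :
    sDen N T X A Q1 Qk g i τ a xiv = ∑ b, sNum N T X A Q1 Qk g i τ a xiv b := by
  unfold sDen sNum
  symm
  rw [Finset.sum_comm]
  refine Finset.sum_congr rfl fun x _ => ?_
  rw [Finset.sum_comm]
  refine Finset.sum_congr rfl fun a' _ => ?_
  simp only [← and_assoc, ite_and, Finset.sum_ite_irrel, Finset.sum_ite_eq, Finset.mem_univ,
    if_true, Finset.sum_const_zero]

theorem sNum_eq_sum_agreeAfter {g : Strat N T X A} (hK : StochKer N T X A Q1 Qk)
    (hg : Stochastic N T X A g) (hc : Causal N T X A g) (i : Fin N) (τ : Fin T)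
    (a : Fin T → ∀ j, A j) (xiv : X i) (b : A i) (xd : Fin T → ∀ j, X j) :
    sNum N T X A Q1 Qk g i τ a xiv b = ∑ x, if AgreeAfter τ x xd then
      (if x τ i = xiv then (∏ j, pfac N T X A Q1 Qk g j τ (fun s => x s j) a) *
        g i τ a (fun s => x s i) b else 0) else 0 := by
  have hne : ∀ q : Fin T, (τ : ℕ) < q → ∀ s : Fin T, (s : ℕ) ≤ τ → s ≠ q :=
    fun q hq s hs h => by subst h; omega
  unfold sNum
  rw [sum_trajP_eq_sum_prefixWeight hK hg hc τ _ (fun q hq x a' w v => by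
    rw [Function.update_of_ne (hne q hq τ le_rfl), Function.update_of_ne (hne q hq τ le_rfl)]
    exact and_congr_left' (forall₂_congr fun s hs => by
      rw [Function.update_of_ne (hne q hq s (Nat.le_of_lt hs))])) xd a]
  refine Finset.sum_congr rfl fun x _ => ?_
  by_cases hx : AgreeAfter τ x xd ∧ x τ i = xiv
  · rw [if_pos hx.1, if_pos hx.2, ← sum_ite_prefixWeight_eq hg hc i τ x a b]
    refine Finset.sum_congr rfl fun a' _ => if_congr ⟨?_, ?_⟩ rfl rfl
    · rintro ⟨⟨hlt, -, hb⟩, -, hgt⟩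
      refine ⟨fun s hs => ?_, hb⟩
      rcases lt_or_gt_of_ne (Fin.val_ne_of_ne hs) with h | h
      exacts [hlt s h, hgt s h]
    · rintro ⟨hoff, hb⟩
      exact ⟨⟨fun s hs => hoff s (Fin.ne_of_lt hs), hx.2, hb⟩, hx.1,
        fun s hs => hoff s (Fin.ne_of_gt hs)⟩
  · rw [Finset.sum_eq_zero fun a' _ => if_neg fun h => hx ⟨h.2.1, h.1.2.1⟩, eq_comm,
      ite_eq_right_iff]
    exact fun h1 => if_neg fun h2 => hx ⟨h1, h2⟩

theorem exists_sNum_eq_mul {g : Strat N T X A} (hK : StochKer N T X A Q1 Qk)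
    (hg : Stochastic N T X A g) (hc : Causal N T X A g) (i : Fin N) (τ : Fin T)
    (a : Fin T → ∀ j, A j) (xiv : X i) :
    ∃ K, ∀ b, sNum N T X A Q1 Qk g i τ a xiv b = K * ∑ z : Fin T → X i,
      if z τ = xiv then pfac N T X A Q1 Qk g i τ z a * g i τ a z b else 0 := by
  rcases isEmpty_or_nonempty (Fin T → ∀ j, X j) with hX | ⟨⟨xd⟩⟩
  · exact ⟨0, fun b => by simp [sNum]⟩
  have : Nonempty (∀ s : {s : Fin T // (τ : ℕ) < s}, ∀ j, X j) := ⟨fun s => xd s⟩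
  set c : ℝ := (Fintype.card (∀ s : {s : Fin T // (τ : ℕ) < s}, ∀ j, X j) : ℝ)
  have hc0 : c ≠ 0 := Nat.cast_ne_zero.mpr Fintype.card_ne_zero
  refine ⟨(∑ w : ∀ j : {j // j ≠ i}, Fin T → X j,
    ∏ j : {j // j ≠ i}, pfac N T X A Q1 Qk g j τ (w j) a) / c, fun b => ?_⟩
  have hunpin := sum_eq_card_smul_sum_ite (fun s : Fin T => (τ : ℕ) < s) xd
    (fun x => if x τ i = xiv then (∏ j, pfac N T X A Q1 Qk g j τ (fun s => x s j) a) *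
      g i τ a (fun s => x s i) b else 0)
    (fun x x' hx => by
      have hle : ∀ s : Fin T, (s : ℕ) ≤ τ → x s = x' s := fun s hs => hx s (by omega)
      rw [hle τ le_rfl, Finset.prod_congr rfl fun j _ =>
          pfac_congr hc j τ (fun s hs => congrFun (hle s hs) j) (fun _ _ => rfl),
        hc i τ a a _ (fun s => x' s i) (fun _ _ => rfl) (fun s hs => congrFun (hle s hs) i)])
    (AgreeAfter τ · xd) fun _ => Iff.rfl
  rw [sum_ite_prod_pfac_eq_mul, nsmul_eq_mul, ← sNum_eq_sum_agreeAfter hK hg hc] at hunpin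
  rw [div_mul_eq_mul_div, eq_div_iff hc0, mul_comm, ← hunpin, mul_comm]

end Marginalization

theorem structured_strategy_formula
    (g : Strat N T X A) (i : Fin N)
    (hK : StochKer N T X A Q1 Qk)
    (hg : Stochastic N T X A g) (hc : Causal N T X A g)
    (τ : Fin T) (a : Fin T → ∀ j, A j) (xiv : X i) (ai : A i)
    (hpos : 0 < sDen N T X A Q1 Qk g i τ a xiv) :
    sNum N T X A Q1 Qk g i τ a xiv ai / sDen N T X A Q1 Qk g i τ a xiv
      = (∑ xit : Fin T → X i,
          if xit τ = xiv then pfac N T X A Q1 Qk g i τ xit a * g i τ a xit ai else 0) /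
        (∑ ai' : A i, ∑ xit : Fin T → X i,
          if xit τ = xiv then pfac N T X A Q1 Qk g i τ xit a * g i τ a xit ai' else 0) := by
  obtain ⟨K, hnum⟩ := exists_sNum_eq_mul hK hg hc i τ a xiv
  have hden : sDen N T X A Q1 Qk g i τ a xiv = K * ∑ ai' : A i, ∑ xit : Fin T → X i,
      if xit τ = xiv then pfac N T X A Q1 Qk g i τ xit a * g i τ a xit ai' else 0 := by
    rw [sDen_eq_sum_sNum, Finset.mul_sum]
    exact Finset.sum_congr rfl fun b _ => hnum b
  have hK0 : K ≠ 0 := by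
    rintro rfl
    rw [hden, zero_mul] at hpos
    exact lt_irrefl _ hpos
  rw [hnum ai, hden, mul_div_mul_left _ _ hK0]

end DynGame
end
end

section
/- (Belief factorization and recursive update.) For any common-agent strategy profile, the common-information belief π_t(x_t) := P(X_t = x_t | a_{1:t-1}) factorizes as a product of marginals π_t(x_t) = ∏_{i=1}^N π_t^i(x_t^i), and each marginal updates via a strategy-independent Bayes map: π_{t+1}^i(x_{t+1}^i) = [Σ_{x_t^i} π_t^i(x_t^i) γ_t^i(a_t^i | x_t^i) Q_t^i(x_{t+1}^i | x_t^i, a_t)] / [Σ_{x̃_t^i} π_t^i(x̃_t^i) γ_t^i(a_t^i | x̃_t^i)] whenever the denominator is positive, and π_{t+1}^i(x_{t+1}^i) = Σ_{x_t^i} π_t^i(x_t^i) Q_t^i(x_{t+1}^i | x_t^i, a_t) otherwise, where γ_t^i(· | ·) is the prescription (stochastic map X^i → P(A^i)) used by player i at time t. -/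
/-!
Summing the trajectory probability over the future of time `τ` (types after `τ`, actions from
`τ` on) gives `1`, one step at a time from the horizon backwards: every transition kernel and
every prescription is a probability distribution, and by causality the earlier factors do not
see the coordinates being summed out. What is left of `P(a_{1:τ-1}, x_τ)` is a sum over the past
types with the public actions frozen at their observed values. Its weight is a product over the
players of single-player chains, so the forward recursion
`W^i_{t+1}(y) = Σ_x W^i_t(x) γ^i_t(a^i_t | x) Q^i_{t+1}(y | x, a_t)` gives
`P(a_{1:τ-1}, x_τ) = ∏_i W^i_τ(x^i_τ)`. Normalizing gives the product form of the belief, and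
the recursion for `W^i` is the Bayes map `F̄` applied to `W^i_τ / Σ_x W^i_τ(x)`.
-/

open scoped Classical BigOperators

noncomputable section

namespace DynGame

variable (N T : ℕ) (X A : Fin N → Type)
  [∀ i, Fintype (X i)] [∀ i, Fintype (A i)]

variable (Q1 : ∀ i, X i → ℝ) (Qk : ∀ i, Fin T → X i → (∀ j, A j) → X i → ℝ)

/-- A common-agent policy: for each player, a map from the public action history to a
prescription (a stochastic map from the player's current type to its actions). -/
abbrev CAPolicy := ∀ i : Fin N, Fin T → (Fin T → ∀ j, A j) → X i → A i → ℝ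

/-- The history-based strategy profile induced by a common-agent policy. -/
def caStrat (ψ : CAPolicy N T X A) : Strat N T X A :=
  fun i t a xi ai => ψ i t a (xi t) ai

/-- Causality of a common-agent policy in the public history. -/
def CACausal (ψ : CAPolicy N T X A) : Prop :=
  ∀ i (t : Fin T) a a' xv,
    (∀ s : Fin T, (s : ℕ) < (t : ℕ) → a s = a' s) → ψ i t a xv = ψ i t a' xv

def CAStochastic (ψ : CAPolicy N T X A) : Prop :=
  ∀ i t a xv, (∀ b, 0 ≤ ψ i t a xv b) ∧ (∑ b, ψ i t a xv b) = 1

/-- The marginal belief `π_t^i(x) = P^ψ(x_t^i = x | a_{1:t-1})`; `τ` is 0-based. -/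
def bel (ψ : CAPolicy N T X A) (i : Fin N) (τ : Fin T)
    (a : Fin T → ∀ j, A j) (xiv : X i) : ℝ :=
  (∑ x' : Fin T → ∀ j, X j, ∑ a' : Fin T → ∀ j, A j,
    if (∀ s : Fin T, (s : ℕ) < (τ : ℕ) → a' s = a s) ∧ x' τ i = xiv
    then trajP N T X A Q1 Qk (caStrat N T X A ψ) x' a' else 0) /
  aMarg N T X A Q1 Qk (caStrat N T X A ψ) ((τ : ℕ) + 1) a

/-- The joint belief `π_t(x) = P^ψ(x_t = x | a_{1:t-1})`. -/
def belJoint (ψ : CAPolicy N T X A) (τ : Fin T)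
    (a : Fin T → ∀ j, A j) (xv : ∀ j, X j) : ℝ :=
  (∑ x' : Fin T → ∀ j, X j, ∑ a' : Fin T → ∀ j, A j,
    if (∀ s : Fin T, (s : ℕ) < (τ : ℕ) → a' s = a s) ∧ x' τ = xv
    then trajP N T X A Q1 Qk (caStrat N T X A ψ) x' a' else 0) /
  aMarg N T X A Q1 Qk (caStrat N T X A ψ) ((τ : ℕ) + 1) a

/-- The strategy-independent one-player Bayes update map `F̄`: `Qt` is the transition
kernel (with the realized joint action already plugged in), `πi` the current marginal,
`γrow x` the probability that type `x` produces the realized own action. -/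
def Fbar {X' : Type} [Fintype X'] (Qt : X' → X' → ℝ) (πi : X' → ℝ) (γrow : X' → ℝ) :
    X' → ℝ :=
  fun x' =>
    if 0 < ∑ x, πi x * γrow x then
      (∑ x, πi x * γrow x * Qt x x') / (∑ x, πi x * γrow x)
    else ∑ x, πi x * Qt x x'

set_option linter.unusedSectionVars false

open Function

section SumOut

variable {α β : Type*} [Fintype α] [DecidableEq α] [Fintype β]

theorem sum_eq_sum_ite_sum_update_s4 (H : (α → β) → ℝ) (m : α) (c : β) :
    ∑ f, H f = ∑ f, if f m = c then ∑ b, H (update f m b) else 0 := by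
  rw [← Finset.sum_filter, Finset.sum_sigma']
  refine Finset.sum_nbij' (fun g => (⟨update g m c, g m⟩ : (_ : α → β) × β))
    (fun p => update p.1 m p.2) ?_ ?_ ?_ ?_ ?_ <;> simp +contextual
  rintro ⟨f, b⟩ rfl
  simp

theorem eqOn_update_of_notMem {S : Set α} {m : α} (hm : m ∉ S) (f : α → β) (b : β) :
    Set.EqOn (update f m b) f S := fun _ hs =>
  update_of_ne (ne_of_mem_of_not_mem hs hm) _ _

theorem eqOn_update_insert_iff {S : Set α} {m : α} (hm : m ∉ S) (f d : α → β) (v : β) :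
    Set.EqOn f (update d m v) (insert m S) ↔ Set.EqOn f d S ∧ f m = v := by
  have hupd := eqOn_update_of_notMem hm d v
  rw [Set.insert_eq, Set.eqOn_union, Set.eqOn_singleton, update_self, and_comm]
  exact and_congr_left' ⟨fun h => h.trans hupd, fun h => h.trans hupd.symm⟩

theorem sum_ite_eqOn_eq_sum_ite_eqOn_insert {S : Set α} {m : α} (hm : m ∉ S) (d : α → β)
    (F G : (α → β) → ℝ) (hF : ∀ f, f m = d m → ∑ b, F (update f m b) = G f) :
    (∑ f, if Set.EqOn f d S then F f else 0) =
      ∑ f, if Set.EqOn f d (insert m S) then G f else 0 := by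
  rw [sum_eq_sum_ite_sum_update_s4 _ m (d m)]
  refine Finset.sum_congr rfl fun f _ => ?_
  have hupd : ∀ b, Set.EqOn (update f m b) d S ↔ Set.EqOn f d S := fun b =>
    ⟨(eqOn_update_of_notMem hm f b).symm.trans, (eqOn_update_of_notMem hm f b).trans⟩
  simp only [hupd, Set.insert_eq, Set.eqOn_union, Set.eqOn_singleton]
  split_ifs <;> simp_all

end SumOut

theorem setOf_lt_val_eq_insert {T n : ℕ} (hn : n + 1 < T) :
    {s : Fin T | n < (s : ℕ)} = insert ⟨n + 1, hn⟩ {s : Fin T | n + 1 < (s : ℕ)} := by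
  ext s
  simp only [Set.mem_insert_iff, Set.mem_ofPred_eq, Fin.ext_iff]
  omega

theorem setOf_le_val_eq_insert {T m : ℕ} (hm : m < T) :
    {s : Fin T | m ≤ (s : ℕ)} = insert ⟨m, hm⟩ {s : Fin T | m + 1 ≤ (s : ℕ)} := by
  ext s
  simp only [Set.mem_insert_iff, Set.mem_ofPred_eq, Fin.ext_iff]
  omega

theorem prod_ite_lt_succ {M : Type*} [CommMonoid M] {T : ℕ} (B : Fin T → M) (m : ℕ)
    (hm : m < T) :
    (∏ t : Fin T, if (t : ℕ) < m + 1 then B t else 1) =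
      (∏ t : Fin T, if (t : ℕ) < m then B t else 1) * B ⟨m, hm⟩ := by
  have hsplit : ∀ t : Fin T, (if (t : ℕ) < m + 1 then B t else 1) =
      (if (t : ℕ) < m then B t else 1) * if t = ⟨m, hm⟩ then B t else 1 := by
    intro t
    have := Fin.ext_iff (a := t) (b := ⟨m, hm⟩)
    split_ifs <;> simp_all <;> omega
  simp only [hsplit, Finset.prod_mul_distrib, Finset.prod_ite_eq', Finset.mem_univ, if_true]

theorem sum_ite_apply_eq_mul_prod_erase {ι : Type*} [Fintype ι] [DecidableEq ι]
    {κ : ι → Type*} [∀ i, Fintype (κ i)] [∀ i, DecidableEq (κ i)] (f : ∀ i, κ i → ℝ)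
    (i : ι) (c : κ i) :
    ∑ x : ∀ j, κ j, (if x i = c then ∏ j, f j (x j) else 0) =
      f i c * ∏ j ∈ Finset.univ.erase i, ∑ y, f j y := by
  symm
  calc f i c * ∏ j ∈ Finset.univ.erase i, ∑ y, f j y
      = ∏ j, ∑ y ∈ update (fun j => (Finset.univ : Finset (κ j))) i {c} j, f j y := by
        rw [← Finset.mul_prod_erase _ _ (Finset.mem_univ i), update_self, Finset.sum_singleton]
        congr 1
        exact Finset.prod_congr rfl fun j hj => by rw [update_of_ne (Finset.ne_of_mem_erase hj)]
    _ = _ := by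
        rw [Finset.prod_univ_sum,
          Fintype.piFinset_update_singleton_eq_filter_piFinset_eq
            (fun j => (Finset.univ : Finset (κ j))) i (Finset.mem_univ c),
          Fintype.piFinset_univ, Finset.sum_filter]

theorem Fbar_div_eq {X' : Type} [Fintype X'] (Qt : X' → X' → ℝ) (w γ : X' → ℝ) {S : ℝ}
    (hS : 0 < S) (hwγ : 0 < ∑ x, w x * γ x) (y : X') :
    Fbar Qt (fun x => w x / S) γ y = (∑ x, w x * γ x * Qt x y) / ∑ x, w x * γ x := by
  have hnorm : ∑ x, w x / S * γ x = (∑ x, w x * γ x) / S := by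
    rw [Finset.sum_div]
    exact Finset.sum_congr rfl fun x _ => div_mul_eq_mul_div _ _ _
  have hnum : ∑ x, w x / S * γ x * Qt x y = (∑ x, w x * γ x * Qt x y) / S := by
    rw [Finset.sum_div]
    exact Finset.sum_congr rfl fun x _ => by ring
  rw [Fbar, hnorm, if_pos (div_pos hwγ hS), hnum, div_div_div_cancel_right₀ hS.ne']

variable {N T X A}

def actProb (ψ : CAPolicy N T X A) (t : Fin T) (x : Fin T → ∀ j, X j)
    (a : Fin T → ∀ j, A j) : ℝ :=
  ∏ i, ψ i t a (x t i) (a t i)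

def transProb (t : Fin T) (x : Fin T → ∀ j, X j) (a : Fin T → ∀ j, A j) : ℝ :=
  ∏ i, if h : (t : ℕ) + 1 < T then Qk i ⟨t + 1, h⟩ (x t i) (a t) (x ⟨t + 1, h⟩ i) else 1

def truncP (ψ : CAPolicy N T X A) (m : ℕ) (x : Fin T → ∀ j, X j) (a : Fin T → ∀ j, A j) :
    ℝ :=
  (if h : 0 < T then ∏ i, Q1 i (x ⟨0, h⟩ i) else 1) *
    ∏ t : Fin T, if (t : ℕ) < m then actProb ψ t x a * transProb Qk t x a else 1

theorem truncP_self (ψ : CAPolicy N T X A) (x : Fin T → ∀ j, X j) (a : Fin T → ∀ j, A j) :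
    truncP Q1 Qk ψ T x a = trajP N T X A Q1 Qk (caStrat N T X A ψ) x a := by
  simp only [truncP, trajP, Fin.is_lt, if_true]
  rfl

theorem truncP_succ (ψ : CAPolicy N T X A) {m : ℕ} (hm : m < T) (x : Fin T → ∀ j, X j)
    (a : Fin T → ∀ j, A j) :
    truncP Q1 Qk ψ (m + 1) x a =
      truncP Q1 Qk ψ m x a * (actProb ψ ⟨m, hm⟩ x a * transProb Qk ⟨m, hm⟩ x a) := by
  rw [truncP, truncP, prod_ite_lt_succ _ m hm, mul_assoc]

def DeterminedUpTo {β : Sort*} (m : ℕ)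
    (F : (Fin T → ∀ j, X j) → (Fin T → ∀ j, A j) → β) : Prop :=
  ∀ x x' a a', (∀ s : Fin T, (s : ℕ) ≤ m → x s = x' s) →
    (∀ s : Fin T, (s : ℕ) < m → a s = a' s) → F x a = F x' a'

theorem DeterminedUpTo.succ {β : Sort*} {m : ℕ}
    {F : (Fin T → ∀ j, X j) → (Fin T → ∀ j, A j) → β} (hF : DeterminedUpTo m F) :
    DeterminedUpTo (m + 1) F :=
  fun x x' a a' hx ha => hF x x' a a' (fun s hs => hx s (by omega)) (fun s hs => ha s (by omega))

theorem truncP_determinedUpTo {ψ : CAPolicy N T X A} (hc : CACausal N T X A ψ) (m : ℕ) :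
    DeterminedUpTo m (truncP Q1 Qk ψ m) := by
  intro x x' a a' hx ha
  unfold truncP
  congr 1
  · split_ifs with h
    · rw [hx ⟨0, h⟩ (Nat.zero_le m)]
    · rfl
  refine Finset.prod_congr rfl fun t _ => ?_
  split_ifs with ht
  swap
  · rfl
  congr 1
  · refine Finset.prod_congr rfl fun i _ => ?_
    rw [hx t ht.le, ha t ht, hc i t a a' _ fun s hs => ha s (hs.trans ht)]
  · refine Finset.prod_congr rfl fun i _ => ?_
    split_ifs with h1
    · rw [hx t ht.le, ha t ht, hx ⟨t + 1, h1⟩ (Nat.succ_le_of_lt ht)]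
    · rfl

theorem sum_transProb_update (hK : StochKer N T X A Q1 Qk) {m : ℕ} (hm : m + 1 < T)
    (x : Fin T → ∀ j, X j) (a : Fin T → ∀ j, A j) :
    ∑ v, transProb Qk ⟨m, by omega⟩ (update x ⟨m + 1, hm⟩ v) a = 1 := by
  have hne : (⟨m, by omega⟩ : Fin T) ≠ ⟨m + 1, hm⟩ := by simp [Fin.ext_iff]
  simp only [transProb, dif_pos hm, update_of_ne hne, update_self]
  rw [← Fintype.prod_sum]
  exact Finset.prod_eq_one fun i _ => (hK.2 i _ _ _).2

theorem sum_actProb_update {ψ : CAPolicy N T X A} (hψ : CAStochastic N T X A ψ)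
    (hc : CACausal N T X A ψ) (t : Fin T) (x : Fin T → ∀ j, X j) (a : Fin T → ∀ j, A j) :
    ∑ b, actProb ψ t x (update a t b) = 1 := by
  have hpast : ∀ b i, ψ i t (update a t b) (x t i) = ψ i t a (x t i) := fun b i =>
    hc i t _ _ _ fun s hs => update_of_ne (Fin.ne_of_lt hs) _ _
  simp only [actProb, hpast, update_self]
  rw [← Fintype.prod_sum]
  exact Finset.prod_eq_one fun i _ => (hψ i t a _).2

/-- The coordinates that `truncP m` does not read are frozen at `xd` and `ad`, so that each
truncated trajectory is counted once. -/
def futurePinnedSum (ψ : CAPolicy N T X A) (xd : Fin T → ∀ j, X j) (ad : Fin T → ∀ j, A j)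
    (C : (Fin T → ∀ j, X j) → (Fin T → ∀ j, A j) → Prop) (m : ℕ) : ℝ :=
  ∑ x, ∑ a, if Set.EqOn x xd {s | m < (s : ℕ)} ∧ Set.EqOn a ad {s | m ≤ (s : ℕ)} ∧ C x a
    then truncP Q1 Qk ψ m x a else 0

theorem futurePinnedSum_succ_eq (hK : StochKer N T X A Q1 Qk) {ψ : CAPolicy N T X A}
    (hc : CACausal N T X A ψ) (xd : Fin T → ∀ j, X j) (ad : Fin T → ∀ j, A j)
    {C : (Fin T → ∀ j, X j) → (Fin T → ∀ j, A j) → Prop} {m : ℕ} (hm : m < T)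
    (hC : DeterminedUpTo m C) :
    futurePinnedSum Q1 Qk ψ xd ad C (m + 1) =
      ∑ x, ∑ a, if Set.EqOn x xd {s | m < (s : ℕ)} ∧ Set.EqOn a ad {s | m + 1 ≤ (s : ℕ)} ∧
          C x a
        then truncP Q1 Qk ψ m x a * actProb ψ ⟨m, hm⟩ x a else 0 := by
  unfold futurePinnedSum
  rw [Finset.sum_comm, Finset.sum_comm (γ := Fin T → ∀ j, X j)]
  refine Finset.sum_congr rfl fun a _ => ?_
  simp only [ite_and, truncP_succ Q1 Qk ψ hm]
  -- sum out the type at time `m + 1`, whose kernel is the only factor that reads it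
  by_cases hlast : m + 1 < T
  · rw [setOf_lt_val_eq_insert hlast]
    refine sum_ite_eqOn_eq_sum_ite_eqOn_insert
      (show (⟨m + 1, hlast⟩ : Fin T) ∉ {s : Fin T | m + 1 < (s : ℕ)} by simp) xd _ _
      fun x _ => ?_
    have hagree : ∀ v, ∀ s : Fin T, (s : ℕ) ≤ m → update x ⟨m + 1, hlast⟩ v s = x s :=
      fun v s hs => update_of_ne (by simp [Fin.ext_iff]; omega) _ _
    have hact : ∀ v, actProb ψ ⟨m, hm⟩ (update x ⟨m + 1, hlast⟩ v) a = actProb ψ ⟨m, hm⟩ x a :=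
      fun v => by simp only [actProb, hagree v ⟨m, hm⟩ le_rfl]
    simp only [hact, hC _ x a a (hagree _) (fun _ _ => rfl),
      truncP_determinedUpTo Q1 Qk hc m _ x a a (hagree _) (fun _ _ => rfl)]
    split_ifs
    · rw [← Finset.mul_sum, ← Finset.mul_sum, sum_transProb_update Q1 Qk hK hlast, mul_one]
    all_goals simp
  · have hnone : {s : Fin T | m < (s : ℕ)} = ∅ := by ext s; simp; omega
    have hnone' : {s : Fin T | m + 1 < (s : ℕ)} = ∅ := by ext s; simp; omega
    have htrans : ∀ x, transProb Qk ⟨m, hm⟩ x a = 1 := fun x =>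
      Finset.prod_eq_one fun i _ => dif_neg hlast
    simp only [htrans, mul_one, hnone, hnone', Set.eqOn_empty, if_true]

theorem sum_actProb_eq_futurePinnedSum {ψ : CAPolicy N T X A} (hψ : CAStochastic N T X A ψ)
    (hc : CACausal N T X A ψ) (xd : Fin T → ∀ j, X j) (ad : Fin T → ∀ j, A j)
    {C : (Fin T → ∀ j, X j) → (Fin T → ∀ j, A j) → Prop} {m : ℕ} (hm : m < T)
    (hC : DeterminedUpTo m C) :
    ∑ x, ∑ a, (if Set.EqOn x xd {s | m < (s : ℕ)} ∧ Set.EqOn a ad {s | m + 1 ≤ (s : ℕ)} ∧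
          C x a
        then truncP Q1 Qk ψ m x a * actProb ψ ⟨m, hm⟩ x a else 0) =
      futurePinnedSum Q1 Qk ψ xd ad C m := by
  unfold futurePinnedSum
  refine Finset.sum_congr rfl fun x _ => ?_
  by_cases hx : Set.EqOn x xd {s | m < (s : ℕ)}
  swap
  · simp [hx]
  -- sum out the action at time `m`: by causality only the prescription at time `m` reads it
  simp only [hx, true_and, ite_and, setOf_le_val_eq_insert hm]
  refine sum_ite_eqOn_eq_sum_ite_eqOn_insert
    (show (⟨m, hm⟩ : Fin T) ∉ {s : Fin T | m + 1 ≤ (s : ℕ)} by simp) ad _ _ fun a _ => ?_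
  have hagree : ∀ b, ∀ s : Fin T, (s : ℕ) < m → a s = update a ⟨m, hm⟩ b s :=
    fun b s hs => (update_of_ne (by simp [Fin.ext_iff]; omega) _ _).symm
  simp only [← hC x x a _ (fun _ _ => rfl) (hagree _),
    ← truncP_determinedUpTo Q1 Qk hc m x x a _ (fun _ _ => rfl) (hagree _)]
  split_ifs
  · rw [← Finset.mul_sum, sum_actProb_update hψ hc, mul_one]
  · simp

theorem futurePinnedSum_self (ψ : CAPolicy N T X A) (xd : Fin T → ∀ j, X j)
    (ad : Fin T → ∀ j, A j) (C : (Fin T → ∀ j, X j) → (Fin T → ∀ j, A j) → Prop)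
    [∀ x a, Decidable (C x a)] :
    futurePinnedSum Q1 Qk ψ xd ad C T =
      ∑ x, ∑ a, if C x a then trajP N T X A Q1 Qk (caStrat N T X A ψ) x a else 0 := by
  have hx : {s : Fin T | T < (s : ℕ)} = ∅ := by ext s; simp
  have ha : {s : Fin T | T ≤ (s : ℕ)} = ∅ := by ext s; simp
  simp only [futurePinnedSum, hx, ha, Set.eqOn_empty, true_and, truncP_self]

theorem sum_ite_trajP_eq_futurePinnedSum (hK : StochKer N T X A Q1 Qk)
    {ψ : CAPolicy N T X A} (hψ : CAStochastic N T X A ψ) (hc : CACausal N T X A ψ)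
    (xd : Fin T → ∀ j, X j) (ad : Fin T → ∀ j, A j)
    {C : (Fin T → ∀ j, X j) → (Fin T → ∀ j, A j) → Prop} [∀ x a, Decidable (C x a)] {m : ℕ}
    (hmT : m ≤ T) (hC : DeterminedUpTo m C) :
    ∑ x, ∑ a, (if C x a then trajP N T X A Q1 Qk (caStrat N T X A ψ) x a else 0) =
      futurePinnedSum Q1 Qk ψ xd ad C m := by
  induction hmT using Nat.decreasingInduction with
  | self => exact (futurePinnedSum_self Q1 Qk ψ xd ad C).symm
  | of_succ k hk ih =>
    rw [ih hC.succ, futurePinnedSum_succ_eq Q1 Qk hK hc xd ad hk hC,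
      sum_actProb_eq_futurePinnedSum Q1 Qk hψ hc xd ad hk hC]

/-- Unnormalized belief of player `i` (the forward recursion of the header), indexed by `ℕ`
with the junk value `0` past the horizon. -/
def forwardWeight (ψ : CAPolicy N T X A) (a : Fin T → ∀ j, A j) (i : Fin N) : ℕ → X i → ℝ
  | 0 => Q1 i
  | n + 1 => fun y => if h : n + 1 < T then
      ∑ x, forwardWeight ψ a i n x *
        (ψ i ⟨n, by omega⟩ a x (a ⟨n, by omega⟩ i) * Qk i ⟨n + 1, h⟩ x (a ⟨n, by omega⟩) y)
    else 0

theorem sum_pinned_truncP_zero (ψ : CAPolicy N T X A) (hT : 0 < T) (a : Fin T → ∀ j, A j)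
    (xd : Fin T → ∀ j, X j) (xv : ∀ j, X j) :
    ∑ x, (if Set.EqOn x xd {s | 0 < (s : ℕ)} ∧ x ⟨0, hT⟩ = xv then truncP Q1 Qk ψ 0 x a else 0) =
      ∏ i, forwardWeight Q1 Qk ψ a i 0 (xv i) := by
  have hpin : ∀ x, (Set.EqOn x xd {s | 0 < (s : ℕ)} ∧ x ⟨0, hT⟩ = xv) ↔
      update xd ⟨0, hT⟩ xv = x := by
    intro x
    rw [eq_comm (b := x), eq_update_iff, and_comm]
    simp [Set.EqOn, Fin.ext_iff, Nat.pos_iff_ne_zero]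
  simp only [hpin, Fintype.sum_ite_eq, truncP, dif_pos hT, update_self, Nat.not_lt_zero,
    if_false, Finset.prod_const_one, mul_one, forwardWeight]

theorem sum_pinned_truncP_succ (ψ : CAPolicy N T X A) (a : Fin T → ∀ j, A j) {n : ℕ}
    (hn : n + 1 < T) (xd : Fin T → ∀ j, X j) (xv : ∀ j, X j) :
    ∑ x, (if Set.EqOn x xd {s | n + 1 < (s : ℕ)} ∧ x ⟨n + 1, hn⟩ = xv
      then truncP Q1 Qk ψ (n + 1) x a else 0) =
    ∑ y, (∑ x, if Set.EqOn x (update xd ⟨n + 1, hn⟩ xv) {s | n < (s : ℕ)} ∧ x ⟨n, by omega⟩ = y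
        then truncP Q1 Qk ψ n x a else 0) *
      ∏ i, ψ i ⟨n, by omega⟩ a (y i) (a ⟨n, by omega⟩ i) *
        Qk i ⟨n + 1, hn⟩ (y i) (a ⟨n, by omega⟩) (xv i) := by
  set t : Fin T := ⟨n, by omega⟩
  set K : (∀ j, X j) → ℝ := fun y =>
    ∏ i, ψ i t a (y i) (a t i) * Qk i ⟨n + 1, hn⟩ (y i) (a t) (xv i)
  have hpin : ∀ x : Fin T → ∀ j, X j,
      (Set.EqOn x xd {s | n + 1 < (s : ℕ)} ∧ x ⟨n + 1, hn⟩ = xv) ↔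
        Set.EqOn x (update xd ⟨n + 1, hn⟩ xv) {s | n < (s : ℕ)} := fun x => by
    rw [setOf_lt_val_eq_insert hn, eqOn_update_insert_iff (by simp)]
  have hstep : ∀ x : Fin T → ∀ j, X j, x ⟨n + 1, hn⟩ = xv →
      actProb ψ t x a * transProb Qk t x a = K (x t) := by
    intro x hx
    simp only [K, actProb, transProb, t, dif_pos hn, ← hx, Finset.prod_mul_distrib]
  calc _ = ∑ x, if Set.EqOn x (update xd ⟨n + 1, hn⟩ xv) {s | n < (s : ℕ)}
          then truncP Q1 Qk ψ n x a * K (x t) else 0 := by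
        refine Finset.sum_congr rfl fun x _ => ?_
        rw [← hpin, truncP_succ Q1 Qk ψ (by omega)]
        split_ifs with hx
        · rw [hstep x hx.2]
        · rfl
    _ = _ := by
        simp only [Finset.sum_mul, ite_mul, zero_mul]
        rw [Finset.sum_comm]
        refine Finset.sum_congr rfl fun x _ => ?_
        by_cases hx : Set.EqOn x (update xd ⟨n + 1, hn⟩ xv) {s | n < (s : ℕ)} <;> simp [hx, K]

theorem sum_pinned_truncP_eq_prod_forwardWeight (ψ : CAPolicy N T X A) (a : Fin T → ∀ j, A j)
    {n : ℕ} (hn : n < T) (xd : Fin T → ∀ j, X j) (xv : ∀ j, X j) :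
    ∑ x, (if Set.EqOn x xd {s | n < (s : ℕ)} ∧ x ⟨n, hn⟩ = xv then truncP Q1 Qk ψ n x a
      else 0) = ∏ i, forwardWeight Q1 Qk ψ a i n (xv i) := by
  induction n generalizing xd xv with
  | zero => exact sum_pinned_truncP_zero Q1 Qk ψ hn a xd xv
  | succ n ih =>
    simp only [sum_pinned_truncP_succ Q1 Qk ψ a hn, ih, ← Finset.prod_mul_distrib,
      forwardWeight, dif_pos hn]
    rw [Fintype.prod_sum]

def jointWeight (ψ : CAPolicy N T X A) (τ : Fin T) (a : Fin T → ∀ j, A j) (xv : ∀ j, X j) : ℝ :=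
  ∑ x : Fin T → ∀ j, X j, ∑ a' : Fin T → ∀ j, A j,
    if (∀ s : Fin T, (s : ℕ) < (τ : ℕ) → a' s = a s) ∧ x τ = xv
    then trajP N T X A Q1 Qk (caStrat N T X A ψ) x a' else 0

theorem jointWeight_eq_prod_forwardWeight (hK : StochKer N T X A Q1 Qk)
    {ψ : CAPolicy N T X A} (hψ : CAStochastic N T X A ψ) (hc : CACausal N T X A ψ)
    (τ : Fin T) (a : Fin T → ∀ j, A j) (xv : ∀ j, X j) :
    jointWeight Q1 Qk ψ τ a xv = ∏ i, forwardWeight Q1 Qk ψ a i τ (xv i) := by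
  have hC : DeterminedUpTo τ fun x a' => (∀ s : Fin T, (s : ℕ) < τ → a' s = a s) ∧ x τ = xv :=
    fun x x' a₁ a₂ hx ha => by
      simp only [hx τ le_rfl]
      exact propext (and_congr_left' (forall₂_congr fun s hs => by rw [ha s hs]))
  have hpin : ∀ a' : Fin T → ∀ j, A j, (Set.EqOn a' a {s | (τ : ℕ) ≤ s} ∧
      ∀ s : Fin T, (s : ℕ) < τ → a' s = a s) ↔ a = a' := by
    refine fun a' => ⟨fun ⟨hlate, hearly⟩ => funext fun s => ?_, by rintro rfl; simp [Set.EqOn]⟩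
    by_cases hs : (s : ℕ) < τ
    · exact (hearly s hs).symm
    · exact (hlate (not_lt.mp hs)).symm
  unfold jointWeight
  -- any trajectory will do as the frozen future; `xv` provides one
  refine (sum_ite_trajP_eq_futurePinnedSum Q1 Qk hK hψ hc (fun _ => xv) a τ.is_lt.le hC).trans ?_
  rw [← sum_pinned_truncP_eq_prod_forwardWeight Q1 Qk ψ a τ.is_lt (fun _ => xv) xv]
  rw [futurePinnedSum]
  refine Finset.sum_congr rfl fun x _ => ?_
  simp only [← and_assoc, hpin]
  rw [Finset.sum_eq_single_of_mem a (Finset.mem_univ a)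
    fun a' _ ha' => if_neg fun h => ha' h.1.2.symm]
  simp

theorem aMarg_succ_eq_sum_jointWeight (ψ : CAPolicy N T X A) (τ : Fin T)
    (a : Fin T → ∀ j, A j) :
    aMarg N T X A Q1 Qk (caStrat N T X A ψ) ((τ : ℕ) + 1) a =
      ∑ xv, jointWeight Q1 Qk ψ τ a xv := by
  symm
  unfold aMarg jointWeight
  rw [Finset.sum_comm]
  refine Finset.sum_congr rfl fun x _ => ?_
  rw [Finset.sum_comm]
  refine Finset.sum_congr rfl fun a' _ => ?_
  simp [ite_and]

theorem bel_eq_sum_jointWeight_div (ψ : CAPolicy N T X A) (i : Fin N) (τ : Fin T)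
    (a : Fin T → ∀ j, A j) (xiv : X i) :
    bel N T X A Q1 Qk ψ i τ a xiv =
      (∑ xv, if xv i = xiv then jointWeight Q1 Qk ψ τ a xv else 0) /
        aMarg N T X A Q1 Qk (caStrat N T X A ψ) ((τ : ℕ) + 1) a := by
  rw [bel]
  congr 1
  unfold jointWeight
  simp only [Finset.ite_sum_zero]
  symm
  rw [Finset.sum_comm]
  refine Finset.sum_congr rfl fun x _ => ?_
  rw [Finset.sum_comm]
  refine Finset.sum_congr rfl fun a' _ => ?_
  rw [Finset.sum_eq_single (x τ) (fun xv _ hxv => by simp [Ne.symm hxv]) (by simp)]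
  by_cases h : x τ i = xiv <;> simp [h]

theorem belJoint_eq_jointWeight_div (ψ : CAPolicy N T X A) (τ : Fin T)
    (a : Fin T → ∀ j, A j) (xv : ∀ j, X j) :
    belJoint N T X A Q1 Qk ψ τ a xv =
      jointWeight Q1 Qk ψ τ a xv / aMarg N T X A Q1 Qk (caStrat N T X A ψ) ((τ : ℕ) + 1) a :=
  rfl

theorem aMarg_succ_eq_prod_sum_forwardWeight (hK : StochKer N T X A Q1 Qk)
    {ψ : CAPolicy N T X A} (hψ : CAStochastic N T X A ψ) (hc : CACausal N T X A ψ)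
    (τ : Fin T) (a : Fin T → ∀ j, A j) :
    aMarg N T X A Q1 Qk (caStrat N T X A ψ) ((τ : ℕ) + 1) a =
      ∏ i, ∑ x, forwardWeight Q1 Qk ψ a i τ x := by
  simp only [aMarg_succ_eq_sum_jointWeight, jointWeight_eq_prod_forwardWeight Q1 Qk hK hψ hc,
    Fintype.prod_sum]

theorem bel_eq_forwardWeight_div (hK : StochKer N T X A Q1 Qk)
    {ψ : CAPolicy N T X A} (hψ : CAStochastic N T X A ψ) (hc : CACausal N T X A ψ)
    (τ : Fin T) (a : Fin T → ∀ j, A j)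
    (hpos : aMarg N T X A Q1 Qk (caStrat N T X A ψ) ((τ : ℕ) + 1) a ≠ 0) (i : Fin N)
    (xiv : X i) :
    bel N T X A Q1 Qk ψ i τ a xiv =
      forwardWeight Q1 Qk ψ a i τ xiv / ∑ x, forwardWeight Q1 Qk ψ a i τ x := by
  rw [aMarg_succ_eq_prod_sum_forwardWeight Q1 Qk hK hψ hc, ← Finset.mul_prod_erase _ _
    (Finset.mem_univ i)] at hpos
  rw [bel_eq_sum_jointWeight_div, aMarg_succ_eq_prod_sum_forwardWeight Q1 Qk hK hψ hc,
    ← Finset.mul_prod_erase _ _ (Finset.mem_univ i)]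
  simp only [jointWeight_eq_prod_forwardWeight Q1 Qk hK hψ hc]
  rw [sum_ite_apply_eq_mul_prod_erase]
  exact mul_div_mul_right _ _ (right_ne_zero_of_mul hpos)

theorem forwardWeight_nonneg (hK : StochKer N T X A Q1 Qk) {ψ : CAPolicy N T X A}
    (hψ : CAStochastic N T X A ψ) (a : Fin T → ∀ j, A j) (i : Fin N) :
    ∀ (n : ℕ) (x : X i), 0 ≤ forwardWeight Q1 Qk ψ a i n x
  | 0, x => (hK.1 i).1 x
  | n + 1, y => by
    unfold forwardWeight
    split_ifs
    · exact Finset.sum_nonneg fun x _ => mul_nonneg (forwardWeight_nonneg hK hψ a i n x)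
        (mul_nonneg ((hψ _ _ _ _).1 _) ((hK.2 _ _ _ _).1 _))
    · exact le_rfl

theorem sum_forwardWeight_pos (hK : StochKer N T X A Q1 Qk) {ψ : CAPolicy N T X A}
    (hψ : CAStochastic N T X A ψ) (hc : CACausal N T X A ψ) (τ : Fin T) (a : Fin T → ∀ j, A j)
    (hpos : 0 < aMarg N T X A Q1 Qk (caStrat N T X A ψ) ((τ : ℕ) + 1) a) (i : Fin N) :
    0 < ∑ x, forwardWeight Q1 Qk ψ a i τ x := by
  rw [aMarg_succ_eq_prod_sum_forwardWeight Q1 Qk hK hψ hc] at hpos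
  refine (Finset.sum_nonneg fun x _ => forwardWeight_nonneg Q1 Qk hK hψ a i τ x).lt_of_ne ?_
  exact fun h => hpos.ne' (Finset.prod_eq_zero (Finset.mem_univ i) h.symm)

theorem sum_forwardWeight_succ (hK : StochKer N T X A Q1 Qk) (ψ : CAPolicy N T X A)
    (a : Fin T → ∀ j, A j) (i : Fin N) {n : ℕ} (h : n + 1 < T) :
    ∑ y, forwardWeight Q1 Qk ψ a i (n + 1) y =
      ∑ x, forwardWeight Q1 Qk ψ a i n x * ψ i ⟨n, by omega⟩ a x (a ⟨n, by omega⟩ i) := by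
  simp only [forwardWeight, dif_pos h]
  rw [Finset.sum_comm]
  refine Finset.sum_congr rfl fun x _ => ?_
  rw [← Finset.mul_sum, ← Finset.mul_sum, (hK.2 _ _ _ _).2, mul_one]

/-- belief factorization and recursive update: under any common-agent
policy the common-information belief factorizes into its marginals, and each marginal
updates by the strategy-independent Bayes map `F̄`. -/
theorem belief_factorization_and_update
    (ψ : CAPolicy N T X A)
    (hK : StochKer N T X A Q1 Qk)
    (hψ : CAStochastic N T X A ψ) (hc : CACausal N T X A ψ)
    (τ : Fin T) (a : Fin T → ∀ j, A j)
    (hpos : 0 < aMarg N T X A Q1 Qk (caStrat N T X A ψ) ((τ : ℕ) + 1) a) :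
    (∀ xv : ∀ j, X j,
        belJoint N T X A Q1 Qk ψ τ a xv = ∏ i, bel N T X A Q1 Qk ψ i τ a (xv i)) ∧
    (∀ (h1 : (τ : ℕ) + 1 < T),
      0 < aMarg N T X A Q1 Qk (caStrat N T X A ψ) ((τ : ℕ) + 2) a →
      ∀ (i : Fin N) (xiv : X i),
        bel N T X A Q1 Qk ψ i ⟨(τ : ℕ) + 1, h1⟩ a xiv
          = Fbar (fun x x' => Qk i ⟨(τ : ℕ) + 1, h1⟩ x (a τ) x')
              (bel N T X A Q1 Qk ψ i τ a)
              (fun x => ψ i τ a x (a τ i)) xiv) := by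
  have hbel := bel_eq_forwardWeight_div Q1 Qk hK hψ hc τ a hpos.ne'
  refine ⟨fun xv => ?_, fun h1 hpos_succ i xiv => ?_⟩
  · rw [belJoint_eq_jointWeight_div, jointWeight_eq_prod_forwardWeight Q1 Qk hK hψ hc,
      aMarg_succ_eq_prod_sum_forwardWeight Q1 Qk hK hψ hc, ← Finset.prod_div_distrib]
    exact Finset.prod_congr rfl fun i _ => (hbel i (xv i)).symm
  · have hsum_succ := sum_forwardWeight_succ Q1 Qk hK ψ a i h1
    have hsum_pos := sum_forwardWeight_pos Q1 Qk hK hψ hc τ a hpos i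
    have hsum_succ_pos := sum_forwardWeight_pos Q1 Qk hK hψ hc ⟨τ + 1, h1⟩ a hpos_succ i
    rw [bel_eq_forwardWeight_div Q1 Qk hK hψ hc ⟨τ + 1, h1⟩ a hpos_succ.ne', funext (hbel i),
      Fbar_div_eq _ _ _ hsum_pos (hsum_succ ▸ hsum_succ_pos), ← hsum_succ]
    simp only [forwardWeight, dif_pos h1, mul_assoc]

end DynGame
end
end

section
/- (Belief state is a controlled Markov process.) In the common-agent reformulation of the game, the process (Π_t, Γ_t) with state Π_t (the common-information belief on types) and control Γ_t (the profile of prescriptions) is a controlled Markov process: for any common-agent policy ψ, P^ψ(π_{t+1} ∈ · | π_{1:t}, γ_{1:t}) = Σ_{a_t, x_t} π_t(x_t) ∏_i γ_t^i(a_t^i | x_t^i) · 1{F(π_t, γ_t, a_t) ∈ ·}, which depends only on (π_t, γ_t) and not on the policy ψ or on the earlier (π_{1:t-1}, γ_{1:t-1}). -/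
open scoped Classical BigOperators

noncomputable section

namespace DynGame

variable (N T : ℕ) (X A : Fin N → Type)
  [∀ i, Fintype (X i)] [∀ i, Fintype (A i)]

variable (Q1 : ∀ i, X i → ℝ) (Qk : ∀ i, Fin T → X i → (∀ j, A j) → X i → ℝ)

/-- The vector belief update map `F(π, γ, a)`, componentwise `F̄`; `t'` is the (0-based)
time of the updated belief, so kernels `Qk · t'` are used. -/
def Fupd (t' : Fin T) (π : ∀ j, X j → ℝ) (γ : ∀ j, X j → A j → ℝ) (av : ∀ j, A j) :
    ∀ j, X j → ℝ :=
  fun j => Fbar (fun x x' => Qk j t' x av x') (π j) (fun x => γ j x (av j))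

/-- The vector of marginal beliefs at (0-based) time `τ` given history `a`. -/
def belVec (ψ : CAPolicy N T X A) (τ : Fin T) (a : Fin T → ∀ j, A j) :
    ∀ j, X j → ℝ :=
  fun j => bel N T X A Q1 Qk ψ j τ a

/-!
Read a trajectory as the sequence `z_t = (x_t, a_t)`. Its probability `trajP` is the product of
kernels giving `z_t` from `z_{<t}` (they see only the past, by causality of `ψ`), and for `t ≥ 1`
each kernel is stochastic: a type transition followed by the prescriptions. Summing out the
coordinates after `τ`, last one first, therefore leaves the product of the kernels up to time `τ`.
Along the fixed public history `a_{<τ}` this product splits over the players, so the joint weight of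
`(x_τ, a_τ)` and the history is `∏ i, m_i (x_τ^i) * ∏ i, γ^i (a_τ^i | x_τ^i)` for some unnormalised
`m_i`. The beliefs are the normalised `m_i`, their product is the conditional law of `x_τ`, and the
conditional law of any event about `a_τ`, such as `F(π_τ, γ_τ, a_τ) = π'`, is the stated average.
-/

set_option linter.unusedSectionVars false

section FiniteSums

theorem sum_ite_eq_update_self {ι γ : Type*} [Fintype ι] [DecidableEq ι] [Fintype γ]
    [DecidableEq (ι → γ)] (a : ι → γ) (i₀ : ι) (f : (ι → γ) → ℝ) :
    ∑ a', (if a' = Function.update a i₀ (a' i₀) then f a' else 0) =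
      ∑ b, f (Function.update a i₀ b) := by
  calc ∑ a', (if a' = Function.update a i₀ (a' i₀) then f a' else 0)
      = ∑ a', ∑ b, (if a' = Function.update a i₀ b then f a' else 0) := by
        refine Finset.sum_congr rfl fun a' _ => ?_
        rw [Finset.sum_eq_single (a' i₀)]
        · rintro b - hb
          exact if_neg fun h => hb (by rw [h, Function.update_self])
        · simp
    _ = ∑ b, f (Function.update a i₀ b) := by
        rw [Finset.sum_comm]
        simp

theorem sum_apply_mul_prod_eq {S I : Type*} [Fintype S] [DecidableEq S] [Fintype I] [DecidableEq I]
    {Y : I → Type*} [∀ i, Fintype (Y i)] [∀ i, DecidableEq (Y i)] (s₀ : S) (f : (∀ i, Y i) → ℝ)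
    (g : ∀ i, (S → Y i) → ℝ) :
    ∑ x : S → ∀ i, Y i, f (x s₀) * ∏ i, g i (fun s => x s i) =
      ∑ y : ∀ i, Y i, f y * ∏ i, ∑ ξ : S → Y i, if ξ s₀ = y i then g i ξ else 0 := by
  simp only [Fintype.prod_sum, Fintype.prod_ite_zero, Finset.mul_sum]
  rw [Finset.sum_comm]
  simp only [← funext_iff, mul_ite, mul_zero, Finset.sum_ite_eq, Finset.mem_univ, if_true]
  exact Fintype.sum_equiv (Equiv.piComm _) _ _ fun x => rfl

theorem sum_ite_apply_eq_mul_prod {I : Type*} [Fintype I] [DecidableEq I] {Y : I → Type*}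
    [∀ i, Fintype (Y i)] [∀ i, DecidableEq (Y i)] (m : ∀ i, Y i → ℝ) (j : I) (y : Y j) :
    ∑ x : ∀ i, Y i, (if x j = y then ∏ i, m i (x i) else 0) =
      m j y * ∏ i ∈ Finset.univ.erase j, ∑ z, m i z := by
  set m' := Function.update m j fun z => if z = y then m j z else 0
  have hm' : ∀ i ∈ Finset.univ.erase j, m' i = m i := fun i hi =>
    Function.update_of_ne (Finset.ne_of_mem_erase hi) _ _
  calc ∑ x : ∀ i, Y i, (if x j = y then ∏ i, m i (x i) else 0)
      = ∑ x : ∀ i, Y i, ∏ i, m' i (x i) := by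
        refine Finset.sum_congr rfl fun x _ => ?_
        rw [← Finset.mul_prod_erase _ _ (Finset.mem_univ j),
          ← Finset.mul_prod_erase _ _ (Finset.mem_univ j),
          Finset.prod_congr rfl fun i hi => congrFun (hm' i hi) (x i)]
        simp [m', ite_mul]
    _ = m j y * ∏ i ∈ Finset.univ.erase j, ∑ z, m i z := by
        rw [← Fintype.prod_sum, ← Finset.mul_prod_erase _ _ (Finset.mem_univ j),
          Finset.prod_congr rfl fun i hi => by rw [hm' i hi]]
        simp [m']

theorem sum_sum_eq_sum_arrow_prod {ι α β : Type*} [Fintype ι] [DecidableEq ι] [Fintype α]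
    [Fintype β] (F : (ι → α) → (ι → β) → ℝ) :
    ∑ x, ∑ y, F x y = ∑ z : ι → α × β, F (fun i => (z i).1) (fun i => (z i).2) := by
  rw [← Fintype.sum_prod_type']
  exact (Fintype.sum_equiv (Equiv.arrowProdEquivProdArrow _ _ _) _ _ fun z => rfl).symm

theorem prod_dite_succ_lt_eq {M : Type*} [CommMonoid M] {n : ℕ} (g : Fin n → M) :
    ∏ t : Fin n, (if h : (t : ℕ) + 1 < n then g ⟨t + 1, h⟩ else 1) =
      ∏ t : Fin n, if (t : ℕ) = 0 then 1 else g t := by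
  cases n with
  | zero => simp
  | succ n =>
    refine Fintype.prod_equiv (finRotate (n + 1)) _ _ fun t => ?_
    by_cases h : (t : ℕ) + 1 < n + 1
    · have hrot : finRotate (n + 1) t = ⟨t + 1, h⟩ := finRotate_of_lt (k := t) (by omega)
      rw [dif_pos h, hrot, if_neg (Nat.succ_ne_zero _)]
    · obtain rfl : t = Fin.last n := Fin.ext (by simp; omega)
      rw [dif_neg h, finRotate_last, Fin.val_zero, if_pos rfl]

end FiniteSums

section SequenceKernels

variable {T} {β : Type*}

def IsCausalKernel (k : Fin T → (Fin T → β) → β → ℝ) : Prop :=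
  ∀ t r r', (∀ s, s < t → r s = r' s) → k t r = k t r'

def prefixProd (k : Fin T → (Fin T → β) → β → ℝ) (n : ℕ) (r : Fin T → β) : ℝ :=
  ∏ t : Fin T, if (t : ℕ) < n then k t r (r t) else 1

variable {k : Fin T → (Fin T → β) → β → ℝ}

theorem prefixProd_congr (hk : IsCausalKernel k) {n : ℕ} {r r' : Fin T → β}
    (h : ∀ t : Fin T, (t : ℕ) < n → r t = r' t) : prefixProd k n r = prefixProd k n r' := by
  refine Finset.prod_congr rfl fun t _ => ?_
  split_ifs with ht
  · rw [hk t r r' fun s hs => h s (by omega), h t ht]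
  · rfl

theorem prefixProd_succ (r : Fin T → β) (κ : Fin T) :
    prefixProd k (κ + 1) r = prefixProd k κ r * k κ r (r κ) := by
  have split : ∀ t : Fin T, (if (t : ℕ) < κ + 1 then k t r (r t) else 1) =
      (if (t : ℕ) < κ then k t r (r t) else 1) * (if t = κ then k κ r (r κ) else 1) := by
    intro t
    rcases lt_trichotomy (t : ℕ) κ with h | h | h
    · simp [h, Nat.lt_succ_of_lt h, Fin.ne_of_lt h]
    · obtain rfl := Fin.ext h
      simp
    · simp [show ¬ (t : ℕ) < κ + 1 by omega, show ¬ (t : ℕ) < κ by omega, Fin.ne_of_gt h]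
  simp only [prefixProd, split, Finset.prod_mul_distrib, Finset.prod_ite_eq', Finset.mem_univ,
    if_true]

variable [Fintype β] [DecidableEq β]

/-- The kernels from `n` on are stochastic: sum them out one coordinate at a time, starting from
the last. -/
theorem sum_ite_agreeBelow_prefixProd (hk : IsCausalKernel k) {n : ℕ} (hn : n ≤ T)
    (hsum : ∀ t : Fin T, n ≤ (t : ℕ) → ∀ r, ∑ y, k t r y = 1) (z : Fin T → β) :
    ∑ r, (if ∀ t : Fin T, (t : ℕ) < n → r t = z t then prefixProd k T r else 0) =
      prefixProd k n z := by
  induction hn using Nat.decreasingInduction generalizing z with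
  | self =>
    have hr : ∀ r : Fin T → β, (∀ t : Fin T, (t : ℕ) < T → r t = z t) ↔ r = z :=
      fun r => ⟨fun h => funext fun t => h t t.isLt, fun h t _ => h ▸ rfl⟩
    simp only [hr, Finset.sum_ite_eq', Finset.mem_univ, if_true]
  | of_succ n hn ih =>
    set κ : Fin T := ⟨n, hn⟩
    have hagree : ∀ (r : Fin T → β) (y : β),
        (∀ t : Fin T, (t : ℕ) < n + 1 → r t = Function.update z κ y t) ↔
          r κ = y ∧ ∀ t : Fin T, (t : ℕ) < n → r t = z t := by
      intro r y
      refine ⟨fun h => ⟨by simpa using h κ (Nat.lt_succ_self n), fun t ht => ?_⟩,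
        fun ⟨hy, h⟩ t ht => ?_⟩
      · rw [h t (by omega), Function.update_of_ne (Fin.ne_of_lt ht)]
      · rcases Nat.lt_succ_iff_lt_or_eq.mp ht with ht | ht
        · rw [Function.update_of_ne (Fin.ne_of_lt ht), h t ht]
        · obtain rfl : t = κ := Fin.ext ht
          rw [Function.update_self, hy]
    calc ∑ r, (if ∀ t : Fin T, (t : ℕ) < n → r t = z t then prefixProd k T r else 0)
        = ∑ y, ∑ r, (if ∀ t : Fin T, (t : ℕ) < n + 1 → r t = Function.update z κ y t
            then prefixProd k T r else 0) := by
          rw [Finset.sum_comm]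
          simp only [hagree, ite_and, Finset.sum_ite_eq, Finset.mem_univ, if_true]
      _ = ∑ y, prefixProd k n z * k κ z y := by
          refine Finset.sum_congr rfl fun y _ => ?_
          rw [ih (fun t ht => hsum t (by omega)), show n + 1 = (κ : ℕ) + 1 from rfl,
            prefixProd_succ, Function.update_self,
            prefixProd_congr hk fun t ht => Function.update_of_ne (Fin.ne_of_lt ht) _ _,
            hk κ _ z fun s hs => Function.update_of_ne (Fin.ne_of_lt hs) _ _]
      _ = prefixProd k n z := by rw [← Finset.mul_sum, hsum κ le_rfl, mul_one]

/-- `d` only serves to complete a prefix below `n` to a full sequence. -/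
theorem sum_mul_prefixProd_eq (hk : IsCausalKernel k) {n : ℕ} (hn : n ≤ T)
    (hsum : ∀ t : Fin T, n ≤ (t : ℕ) → ∀ r, ∑ y, k t r y = 1) (G : (Fin T → β) → ℝ)
    (hG : ∀ r r', (∀ t : Fin T, (t : ℕ) < n → r t = r' t) → G r = G r') (d : Fin T → β) :
    ∑ r, prefixProd k T r * G r =
      ∑ z, if ∀ t : Fin T, n ≤ (t : ℕ) → z t = d t then prefixProd k n z * G z else 0 := by
  symm
  calc ∑ z, (if ∀ t : Fin T, n ≤ (t : ℕ) → z t = d t then prefixProd k n z * G z else 0)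
      = ∑ z, ∑ r, (if (∀ t : Fin T, n ≤ (t : ℕ) → z t = d t) ∧
          ∀ t : Fin T, (t : ℕ) < n → r t = z t then prefixProd k T r * G z else 0) := by
        refine Finset.sum_congr rfl fun z _ => ?_
        rw [← sum_ite_agreeBelow_prefixProd hk hn hsum, Finset.sum_mul]
        split_ifs with hz
        · simp only [and_iff_right hz, ite_mul, zero_mul]
        · simp only [hz, false_and, if_false, Finset.sum_const_zero]
    _ = ∑ r, prefixProd k T r * G r := by
        rw [Finset.sum_comm]
        refine Finset.sum_congr rfl fun r _ => ?_
        let splice : Fin T → β := fun t => if (t : ℕ) < n then r t else d t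
        rw [Finset.sum_eq_single splice]
        · rw [if_pos ⟨fun t ht => if_neg (by omega), fun t ht => (if_pos ht).symm⟩,
            hG splice r fun t ht => if_pos ht]
        · rintro z - hz
          refine if_neg fun ⟨hd, hr⟩ => hz (funext fun t => ?_)
          by_cases ht : (t : ℕ) < n
          · simp [splice, ht, hr t ht]
          · simp [splice, ht, hd t (by omega)]
        · simp

end SequenceKernels

section CommonAgent

variable {N T X A}

def typeKernel (i : Fin N) (t : Fin T) (ξ : Fin T → X i) (a' : Fin T → ∀ j, A j) (y : X i) :
    ℝ :=
  if (t : ℕ) = 0 then Q1 i y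
  else
    Qk i t (ξ ⟨t - 1, (Nat.sub_le _ _).trans_lt t.isLt⟩)
      (a' ⟨t - 1, (Nat.sub_le _ _).trans_lt t.isLt⟩) y

def jointKernel (ψ : CAPolicy N T X A) (t : Fin T) (z : Fin T → (∀ j, X j) × (∀ j, A j))
    (v : (∀ j, X j) × (∀ j, A j)) : ℝ :=
  ∏ i, typeKernel Q1 Qk i t (fun s => (z s).1 i) (fun s => (z s).2) (v.1 i) *
    ψ i t (fun s => (z s).2) (v.1 i) (v.2 i)

def typePathWeight (ψ : CAPolicy N T X A) (τ : Fin T) (a : Fin T → ∀ j, A j) (i : Fin N)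
    (ξ : Fin T → X i) : ℝ :=
  (∏ t : Fin T, if (t : ℕ) < τ then typeKernel Q1 Qk i t ξ a (ξ t) * ψ i t a (ξ t) (a t i) else 1) *
    typeKernel Q1 Qk i τ ξ a (ξ τ)

/-- The types after `τ` are frozen at `x₀`, an arbitrary completion (see
`sum_mul_prefixProd_eq`). -/
def unnormBelief (ψ : CAPolicy N T X A) (τ : Fin T) (a : Fin T → ∀ j, A j)
    (x₀ : Fin T → ∀ j, X j) (i : Fin N) (y : X i) : ℝ :=
  ∑ ξ : Fin T → X i, if ξ τ = y then
    (if ∀ t : Fin T, τ < t → ξ t = x₀ t i then typePathWeight Q1 Qk ψ τ a i ξ else 0) else 0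

variable {Q1 Qk}

theorem typeKernel_congr (i : Fin N) (t : Fin T) {ξ ξ' : Fin T → X i}
    {a' a'' : Fin T → ∀ j, A j} (h : ∀ s, s < t → ξ s = ξ' s ∧ a' s = a'' s) :
    typeKernel Q1 Qk i t ξ a' = typeKernel Q1 Qk i t ξ' a'' := by
  unfold typeKernel
  split_ifs with ht
  · rfl
  · obtain ⟨hξ, ha⟩ := h ⟨t - 1, (Nat.sub_le _ _).trans_lt t.isLt⟩
      (Fin.lt_def.mpr (by simp; omega))
    rw [hξ, ha]

theorem isCausalKernel_jointKernel {ψ : CAPolicy N T X A} (hc : CACausal N T X A ψ) :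
    IsCausalKernel (jointKernel Q1 Qk ψ) := by
  intro t r r' h
  funext v
  refine Finset.prod_congr rfl fun i _ => ?_
  rw [typeKernel_congr i t fun s hs => by rw [h s hs]; exact ⟨rfl, rfl⟩,
    hc i t _ _ _ fun s hs => by rw [h s hs]]

theorem sum_jointKernel {ψ : CAPolicy N T X A}
    (hQk : ∀ i t x b, ∑ x', Qk i t x b x' = 1) (hψ : CAStochastic N T X A ψ)
    {t : Fin T} (ht : (t : ℕ) ≠ 0) (z : Fin T → (∀ j, X j) × (∀ j, A j)) :
    ∑ v, jointKernel Q1 Qk ψ t z v = 1 := by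
  calc ∑ v, jointKernel Q1 Qk ψ t z v
      = ∏ i, ∑ y, ∑ b, typeKernel Q1 Qk i t (fun s => (z s).1 i) (fun s => (z s).2) y *
          ψ i t (fun s => (z s).2) y b := by
        simp_rw [Fintype.prod_sum, Fintype.sum_prod_type]
        rfl
    _ = 1 := by simp [← Finset.mul_sum, (hψ _ _ _ _).2, typeKernel, ht, hQk]

theorem trajP_eq_prefixProd (ψ : CAPolicy N T X A) (x : Fin T → ∀ j, X j)
    (a' : Fin T → ∀ j, A j) :
    trajP N T X A Q1 Qk (caStrat N T X A ψ) x a' =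
      prefixProd (jointKernel Q1 Qk ψ) T (fun t => (x t, a' t)) := by
  have hinit : ∏ t : Fin T, (if (t : ℕ) = 0 then ∏ i, Q1 i (x t i) else 1) =
      if h : 0 < T then ∏ i, Q1 i (x ⟨0, h⟩ i) else 1 := by
    split_ifs with h
    · rw [Finset.prod_eq_single ⟨0, h⟩ (fun t _ ht => if_neg fun h0 => ht (Fin.ext h0))
        (by simp), if_pos rfl]
    · exact Finset.prod_eq_one fun t _ => absurd t.isLt (by omega)
  have hshift : ∏ t : Fin T, ∏ i, (if h : (t : ℕ) + 1 < T then
        Qk i ⟨t + 1, h⟩ (x t i) (a' t) (x ⟨t + 1, h⟩ i) else 1) =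
      ∏ t : Fin T, if (t : ℕ) = 0 then 1 else ∏ i, Qk i t
        (x ⟨t - 1, (Nat.sub_le _ _).trans_lt t.isLt⟩ i)
        (a' ⟨t - 1, (Nat.sub_le _ _).trans_lt t.isLt⟩) (x t i) := by
    rw [← prod_dite_succ_lt_eq]
    simp only [Finset.prod_dite_irrel, Finset.prod_const_one]
    rfl
  simp only [trajP, prefixProd, jointKernel, caStrat, typeKernel, Fin.is_lt, if_true,
    Finset.prod_mul_distrib, Finset.prod_ite_irrel, hshift, ← hinit]
  conv_rhs => rw [Finset.prod_ite, Finset.prod_filter, Finset.prod_filter]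
  simp only [ite_not]
  ring

theorem prefixProd_jointKernel_update {ψ : CAPolicy N T X A} (hc : CACausal N T X A ψ)
    (τ : Fin T) (a : Fin T → ∀ j, A j) (av : ∀ j, A j) (x : Fin T → ∀ j, X j) :
    prefixProd (jointKernel Q1 Qk ψ) (τ + 1) (fun t => (x t, Function.update a τ av t)) =
      ∏ i, typePathWeight Q1 Qk ψ τ a i (fun t => x t i) * ψ i τ a (x τ i) (av i) := by
  have hagree : ∀ t : Fin T, t < τ → (x t, Function.update a τ av t) = (x t, a t) :=
    fun t ht => by rw [Function.update_of_ne (Fin.ne_of_lt ht)]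
  rw [prefixProd_succ, prefixProd_congr (isCausalKernel_jointKernel hc) fun t ht => hagree t ht,
    isCausalKernel_jointKernel hc τ _ (fun t => (x t, a t)) hagree, Function.update_self]
  simp only [prefixProd, jointKernel, typePathWeight, Finset.ite_prod_one]
  rw [Finset.prod_comm, ← Finset.prod_mul_distrib]
  refine Finset.prod_congr rfl fun i _ => ?_
  ring

end CommonAgent

section TrajectoryLaw

variable {N T X A Q1 Qk} {ψ : CAPolicy N T X A}

theorem sum_trajP_mul_eq_sum_prefixProd (hQk : ∀ i t x b, ∑ x', Qk i t x b x' = 1)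
    (hψ : CAStochastic N T X A ψ) (hc : CACausal N T X A ψ) (τ : Fin T)
    (G : (Fin T → ∀ j, X j) → (Fin T → ∀ j, A j) → ℝ)
    (hG : ∀ x x' a' a'', (∀ t, t ≤ τ → x t = x' t ∧ a' t = a'' t) → G x a' = G x' a'')
    (x₀ : Fin T → ∀ j, X j) (a₀ : Fin T → ∀ j, A j) :
    ∑ x, ∑ a', trajP N T X A Q1 Qk (caStrat N T X A ψ) x a' * G x a' =
      ∑ x, ∑ a', if ∀ t, τ < t → x t = x₀ t ∧ a' t = a₀ t then
        prefixProd (jointKernel Q1 Qk ψ) (τ + 1) (fun t => (x t, a' t)) * G x a' else 0 := by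
  simp only [sum_sum_eq_sum_arrow_prod, trajP_eq_prefixProd, Prod.mk.eta]
  rw [sum_mul_prefixProd_eq (isCausalKernel_jointKernel hc) τ.isLt
    (fun t ht => sum_jointKernel hQk hψ (Nat.pos_iff_ne_zero.mp (by omega))) _
    (fun r r' h => hG _ _ _ _ fun t ht => Prod.ext_iff.mp (h t (Nat.lt_succ_of_le ht)))
    fun t => (x₀ t, a₀ t)]
  exact Finset.sum_congr rfl fun z _ =>
    if_congr (forall_congr' fun t => imp_congr Iff.rfl Prod.ext_iff) rfl rfl

theorem sum_trajP_eq_sum_unnormBelief (hQk : ∀ i t x b, ∑ x', Qk i t x b x' = 1)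
    (hψ : CAStochastic N T X A ψ) (hc : CACausal N T X A ψ) (τ : Fin T)
    (a : Fin T → ∀ j, A j) (x₀ : Fin T → ∀ j, X j) (Φ : (∀ j, X j) → (∀ j, A j) → ℝ) :
    ∑ x : Fin T → ∀ j, X j, ∑ a' : Fin T → ∀ j, A j,
        (if ∀ s : Fin T, (s : ℕ) < (τ : ℕ) → a' s = a s then
          trajP N T X A Q1 Qk (caStrat N T X A ψ) x a' * Φ (x τ) (a' τ) else 0) =
      ∑ av, ∑ xv, (∏ i, unnormBelief Q1 Qk ψ τ a x₀ i (xv i)) *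
        (∏ i, ψ i τ a (xv i) (av i)) * Φ xv av := by
  let G : (Fin T → ∀ j, X j) → (Fin T → ∀ j, A j) → ℝ := fun x a' =>
    if ∀ s : Fin T, (s : ℕ) < (τ : ℕ) → a' s = a s then Φ (x τ) (a' τ) else 0
  have hG : ∀ x x' a' a'', (∀ t, t ≤ τ → x t = x' t ∧ a' t = a'' t) → G x a' = G x' a'' := by
    intro x x' a' a'' h
    simp only [G, (h τ le_rfl).1, (h τ le_rfl).2]
    exact if_congr (forall_congr' fun s => imp_congr_right fun hs => by
      rw [(h s (Fin.le_of_lt hs)).2]) rfl rfl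
  have hconds : ∀ (x : Fin T → ∀ j, X j) (a' : Fin T → ∀ j, A j),
      ((∀ t, τ < t → x t = x₀ t ∧ a' t = a t) ∧ ∀ s : Fin T, (s : ℕ) < τ → a' s = a s) ↔
        a' = Function.update a τ (a' τ) ∧ ∀ t, τ < t → x t = x₀ t := by
    intro x a'
    simp only [Function.eq_update_iff, true_and, ne_iff_lt_or_gt, or_imp, imp_and, forall_and]
    tauto
  calc _ = ∑ x, ∑ a', trajP N T X A Q1 Qk (caStrat N T X A ψ) x a' * G x a' := by
        simp only [G, mul_ite, mul_zero]
    _ = ∑ a' : Fin T → ∀ j, A j, ∑ x : Fin T → ∀ j, X j,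
          if a' = Function.update a τ (a' τ) then
            (if ∀ t, τ < t → x t = x₀ t then
              Φ (x τ) (a' τ) * prefixProd (jointKernel Q1 Qk ψ) (τ + 1) (fun t => (x t, a' t))
              else 0) else 0 := by
        rw [sum_trajP_mul_eq_sum_prefixProd hQk hψ hc τ G hG x₀ a, Finset.sum_comm]
        refine Finset.sum_congr rfl fun a' _ => Finset.sum_congr rfl fun x _ => ?_
        simp only [G, mul_ite, mul_zero, ← ite_and]
        exact if_congr (hconds x a') (mul_comm _ _) rfl
    _ = ∑ av, ∑ x : Fin T → ∀ j, X j, (Φ (x τ) av * ∏ i, ψ i τ a (x τ i) (av i)) *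
          ∏ i, (if ∀ t, τ < t → x t i = x₀ t i then
            typePathWeight Q1 Qk ψ τ a i (fun t => x t i) else 0) := by
        simp only [Finset.sum_ite_irrel, Finset.sum_const_zero]
        rw [sum_ite_eq_update_self]
        refine Finset.sum_congr rfl fun av _ => Finset.sum_congr rfl fun x _ => ?_
        rw [Function.update_self, prefixProd_jointKernel_update hc, Fintype.prod_ite_zero,
          Finset.prod_mul_distrib]
        have hiff : (∀ t, τ < t → x t = x₀ t) ↔ ∀ i, ∀ t, τ < t → x t i = x₀ t i :=
          ⟨fun h i t ht => congrFun (h t ht) i, fun h t ht => funext fun i => h i t ht⟩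
        by_cases h : ∀ t, τ < t → x t = x₀ t
        · rw [if_pos h, if_pos (hiff.mp h)]
          ring
        · rw [if_neg h, if_neg (mt hiff.mpr h), mul_zero]
    _ = _ := by
        refine Finset.sum_congr rfl fun av _ => ?_
        rw [sum_apply_mul_prod_eq τ (fun xv => Φ xv av * ∏ i, ψ i τ a (xv i) (av i))
          fun i ξ => if ∀ t, τ < t → ξ t = x₀ t i then typePathWeight Q1 Qk ψ τ a i ξ else 0]
        refine Finset.sum_congr rfl fun xv _ => ?_
        simp only [unnormBelief]
        ring

theorem sum_prod_policy_eq_one (hψ : CAStochastic N T X A ψ) (t : Fin T)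
    (a : Fin T → ∀ j, A j) (xv : ∀ j, X j) :
    ∑ av : ∀ j, A j, ∏ i, ψ i t a (xv i) (av i) = 1 := by
  rw [← Fintype.prod_sum]
  exact Finset.prod_eq_one fun i _ => (hψ i t a (xv i)).2

theorem aMarg_eq_prod_sum_unnormBelief (hQk : ∀ i t x b, ∑ x', Qk i t x b x' = 1)
    (hψ : CAStochastic N T X A ψ) (hc : CACausal N T X A ψ) (τ : Fin T)
    (a : Fin T → ∀ j, A j) (x₀ : Fin T → ∀ j, X j) :
    aMarg N T X A Q1 Qk (caStrat N T X A ψ) (τ + 1) a =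
      ∏ i, ∑ y, unnormBelief Q1 Qk ψ τ a x₀ i y := by
  calc aMarg N T X A Q1 Qk (caStrat N T X A ψ) (τ + 1) a
      = ∑ x : Fin T → ∀ j, X j, ∑ a' : Fin T → ∀ j, A j,
          (if ∀ s : Fin T, (s : ℕ) < (τ : ℕ) → a' s = a s then
            trajP N T X A Q1 Qk (caStrat N T X A ψ) x a' * 1 else 0) := by
        refine Finset.sum_congr rfl fun x _ => Finset.sum_congr rfl fun a' _ =>
          if_congr ?_ (mul_one _).symm rfl
        exact forall_congr' fun s => imp_congr_left Nat.add_lt_add_iff_right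
    _ = ∑ xv : ∀ j, X j, ∏ i, unnormBelief Q1 Qk ψ τ a x₀ i (xv i) := by
        rw [sum_trajP_eq_sum_unnormBelief hQk hψ hc τ a x₀ fun _ _ => 1, Finset.sum_comm]
        simp only [mul_one, ← Finset.mul_sum, sum_prod_policy_eq_one hψ]
    _ = ∏ i, ∑ y, unnormBelief Q1 Qk ψ τ a x₀ i y := (Fintype.prod_sum _).symm

theorem bel_eq_unnormBelief_div (hQk : ∀ i t x b, ∑ x', Qk i t x b x' = 1)
    (hψ : CAStochastic N T X A ψ) (hc : CACausal N T X A ψ) (τ : Fin T)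
    (a : Fin T → ∀ j, A j) (x₀ : Fin T → ∀ j, X j)
    (hZ : aMarg N T X A Q1 Qk (caStrat N T X A ψ) (τ + 1) a ≠ 0) (i : Fin N) (y : X i) :
    bel N T X A Q1 Qk ψ i τ a y =
      unnormBelief Q1 Qk ψ τ a x₀ i y / ∑ z, unnormBelief Q1 Qk ψ τ a x₀ i z := by
  set m := unnormBelief Q1 Qk ψ τ a x₀
  have hnum : ∑ x : Fin T → ∀ j, X j, ∑ a' : Fin T → ∀ j, A j,
      (if (∀ s : Fin T, (s : ℕ) < (τ : ℕ) → a' s = a s) ∧ x τ i = y then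
        trajP N T X A Q1 Qk (caStrat N T X A ψ) x a' else 0) =
      m i y * ∏ j ∈ Finset.univ.erase i, ∑ z, m j z := by
    calc _ = ∑ x : Fin T → ∀ j, X j, ∑ a' : Fin T → ∀ j, A j,
          (if ∀ s : Fin T, (s : ℕ) < (τ : ℕ) → a' s = a s then
            trajP N T X A Q1 Qk (caStrat N T X A ψ) x a' * (if x τ i = y then 1 else 0)
            else 0) := by
          simp only [ite_and, mul_ite, mul_one, mul_zero]
      _ = ∑ xv : ∀ j, X j, if xv i = y then ∏ j, m j (xv j) else 0 := by
          rw [sum_trajP_eq_sum_unnormBelief hQk hψ hc τ a x₀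
            fun xv _ => if xv i = y then 1 else 0, Finset.sum_comm]
          refine Finset.sum_congr rfl fun xv _ => ?_
          rw [← Finset.sum_mul, ← Finset.mul_sum, sum_prod_policy_eq_one hψ, mul_one, mul_ite,
            mul_one, mul_zero]
      _ = m i y * ∏ j ∈ Finset.univ.erase i, ∑ z, m j z := sum_ite_apply_eq_mul_prod m i y
  have hden : aMarg N T X A Q1 Qk (caStrat N T X A ψ) (τ + 1) a =
      (∑ z, m i z) * ∏ j ∈ Finset.univ.erase i, ∑ z, m j z := by
    rw [aMarg_eq_prod_sum_unnormBelief hQk hψ hc τ a x₀]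
    exact (Finset.mul_prod_erase _ _ (Finset.mem_univ i)).symm
  rw [bel, hnum, hden, mul_div_mul_right _ _ (right_ne_zero_of_mul (hden ▸ hZ))]

theorem sum_ite_currentAction_div_aMarg (hQk : ∀ i t x b, ∑ x', Qk i t x b x' = 1)
    (hψ : CAStochastic N T X A ψ) (hc : CACausal N T X A ψ) (τ : Fin T)
    (a : Fin T → ∀ j, A j)
    (hpos : 0 < aMarg N T X A Q1 Qk (caStrat N T X A ψ) ((τ : ℕ) + 1) a)
    (S : (∀ j, A j) → Prop) [DecidablePred S] :
    (∑ x' : Fin T → ∀ j, X j, ∑ a' : Fin T → ∀ j, A j,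
        if (∀ s : Fin T, (s : ℕ) < (τ : ℕ) → a' s = a s) ∧ S (a' τ)
        then trajP N T X A Q1 Qk (caStrat N T X A ψ) x' a' else 0) /
      aMarg N T X A Q1 Qk (caStrat N T X A ψ) ((τ : ℕ) + 1) a =
      ∑ av : ∀ j, A j, ∑ xv : ∀ j, X j,
        (∏ j, belVec N T X A Q1 Qk ψ τ a j (xv j)) * (∏ j, ψ j τ a (xv j) (av j)) *
          (if S av then 1 else 0) := by
  obtain ⟨x₀⟩ : Nonempty (Fin T → ∀ j, X j) := by
    by_contra h
    rw [not_nonempty_iff] at h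
    simp [aMarg] at hpos
  set m := unnormBelief Q1 Qk ψ τ a x₀
  have hbel : ∀ j y, belVec N T X A Q1 Qk ψ τ a j y = m j y / ∑ z, m j z :=
    bel_eq_unnormBelief_div hQk hψ hc τ a x₀ hpos.ne'
  calc _ = (∑ av : ∀ j, A j, ∑ xv : ∀ j, X j,
          (∏ j, m j (xv j)) * (∏ j, ψ j τ a (xv j) (av j)) * (if S av then 1 else 0)) /
        ∏ j, ∑ z, m j z := by
        rw [aMarg_eq_prod_sum_unnormBelief hQk hψ hc τ a x₀,
          ← sum_trajP_eq_sum_unnormBelief hQk hψ hc τ a x₀ fun _ av => if S av then 1 else 0]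
        simp only [ite_and, mul_ite, mul_one, mul_zero]
        rfl
    _ = _ := by
        simp only [hbel, Finset.prod_div_distrib, Finset.sum_div]
        refine Finset.sum_congr rfl fun av _ => Finset.sum_congr rfl fun xv _ => ?_
        ring

end TrajectoryLaw

/-- the belief state is a controlled Markov process: conditionally on the
public history `a_{1:t-1}` (which determines the past beliefs `π_{1:t}` and prescriptions
`γ_{1:t}`), the probability that the next belief takes the value `π'` equals
`∑_{a_t, x_t} π_t(x_t) ∏_i γ_t^i(a_t^i|x_t^i) 1{F(π_t, γ_t, a_t) = π'}`, a function of
`(π_t, γ_t)` alone. -/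
theorem belief_controlled_markov
    (ψ : CAPolicy N T X A)
    (hK : StochKer N T X A Q1 Qk)
    (hψ : CAStochastic N T X A ψ) (hc : CACausal N T X A ψ)
    (τ : Fin T) (h1 : (τ : ℕ) + 1 < T) (a : Fin T → ∀ j, A j)
    (hpos : 0 < aMarg N T X A Q1 Qk (caStrat N T X A ψ) ((τ : ℕ) + 1) a) :
    ∀ π' : ∀ j, X j → ℝ,
      (∑ x' : Fin T → ∀ j, X j, ∑ a' : Fin T → ∀ j, A j,
        if (∀ s : Fin T, (s : ℕ) < (τ : ℕ) → a' s = a s) ∧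
           Fupd N T X A Qk ⟨(τ : ℕ) + 1, h1⟩ (belVec N T X A Q1 Qk ψ τ a)
             (fun j => ψ j τ a) (a' τ) = π'
        then trajP N T X A Q1 Qk (caStrat N T X A ψ) x' a' else 0) /
      aMarg N T X A Q1 Qk (caStrat N T X A ψ) ((τ : ℕ) + 1) a
        = ∑ av : ∀ j, A j, ∑ xv : ∀ j, X j,
            (∏ j, belVec N T X A Q1 Qk ψ τ a j (xv j)) *
            (∏ j, ψ j τ a (xv j) (av j)) *
            (if Fupd N T X A Qk ⟨(τ : ℕ) + 1, h1⟩ (belVec N T X A Q1 Qk ψ τ a)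
                 (fun j => ψ j τ a) av = π' then 1 else 0) := fun π' =>
  sum_ite_currentAction_div_aMarg (fun i t x b => (hK.2 i t x b).2) hψ hc τ a hpos
    fun av => Fupd N T X A Qk ⟨(τ : ℕ) + 1, h1⟩ (belVec N T X A Q1 Qk ψ τ a)
      (fun j => ψ j τ a) av = π'

end DynGame
end
end
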